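/- arXiv:2007.08022 — 11 statements merged into one kernel-verified Lean document; each statement's English description precedes it below -/
import Mathlib

section
/- For every coherent pair of random variables (X,Y) one has E|X-Y| ≤ 1/2, and this bound is sharp: the supremum of E|X-Y| over all coherent pairs (X,Y) equals 1/2 (it is attained, e.g., by X = 1_A and Y = P(A) for any event A with P(A) = 1/2). -/
/-!
Write `X = E[f | G]`, `Y = E[f | H]` with `f = 1_A` (or any `f` with values in `[0, 1]`).
For `0 ≤ z ≤ 1` and all reals `x, y`, `|x - y| ≤ 1/2 + (1 - 2x)(z - x) + (1 - 2y)(z - y)`: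
the right-hand side is affine in `z`, and at `z = 0` and `z = 1` the difference of the two
sides is a sum of squares. Taking `(x, y, z) = (X, Y, f)` and integrating, each correction term
`(1 - 2X)(f - X)` has mean zero because `1 - 2X` is bounded and `G`-measurable while `f - X` is
orthogonal to such functions. Equality holds for `X = P(A)`, `Y = 1_A` with `P(A) = 1/2`.
-/

open MeasureTheory ProbabilityTheory

/-- A pair of random variables `(X, Y)` on a probability space is *coherent* if there are an
event `A` and sub-σ-algebras `G`, `H` such that `X = E[1_A | G]` and `Y = E[1_A | H]` a.s. -/
def IsCoherentPair {Ω : Type} [m0 : MeasurableSpace Ω] (μ : Measure Ω) (X Y : Ω → ℝ) : Prop :=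
  ∃ (A : Set Ω) (G H : MeasurableSpace Ω),
    MeasurableSet A ∧ G ≤ m0 ∧ H ≤ m0 ∧
    X =ᵐ[μ] μ[A.indicator (fun _ => (1 : ℝ)) | G] ∧
    Y =ᵐ[μ] μ[A.indicator (fun _ => (1 : ℝ)) | H]

/-- The set of values `E|X - Y|` over all coherent pairs `(X, Y)`. -/
def coherentAbsVals : Set ℝ :=
  { r : ℝ | ∃ (Ω : Type) (m0 : MeasurableSpace Ω) (μ : Measure Ω),
      IsProbabilityMeasure μ ∧ ∃ X Y : Ω → ℝ,
        IsCoherentPair μ X Y ∧ r = ∫ ω, |X ω - Y ω| ∂μ }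

theorem abs_sub_le_half_add_mul_sub {x y z : ℝ} (hz₀ : 0 ≤ z) (hz₁ : z ≤ 1) :
    |x - y| ≤ 1 / 2 + (1 - 2 * x) * (z - x) + (1 - 2 * y) * (z - y) := by
  have hz : 0 ≤ 1 - z := by linarith
  rw [abs_le]
  constructor
  · nlinarith [mul_nonneg hz (sq_nonneg x), mul_nonneg hz (sq_nonneg (y - 1 / 2)),
      mul_nonneg hz₀ (sq_nonneg (x - 1 / 2)), mul_nonneg hz₀ (sq_nonneg (y - 1))]
  · nlinarith [mul_nonneg hz (sq_nonneg y), mul_nonneg hz (sq_nonneg (x - 1 / 2)),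
      mul_nonneg hz₀ (sq_nonneg (y - 1 / 2)), mul_nonneg hz₀ (sq_nonneg (x - 1))]

section CondExp

variable {Ω : Type*} {m m₀ : MeasurableSpace Ω} {μ : Measure Ω}

theorem integral_mul_sub_condExp_eq_zero [IsFiniteMeasure μ] (hm : m ≤ m₀) {f g : Ω → ℝ} {c : ℝ}
    (hg : StronglyMeasurable[m] g) (hg_bound : ∀ᵐ ω ∂μ, ‖g ω‖ ≤ c) (hf : Integrable f μ) :
    ∫ ω, g ω * (f ω - μ[f | m] ω) ∂μ = 0 := by
  have hg' : AEStronglyMeasurable g μ := (hg.mono hm).aestronglyMeasurable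
  have pull_out : ∫ ω, g ω * μ[f | m] ω ∂μ = ∫ ω, g ω * f ω ∂μ :=
    calc ∫ ω, g ω * μ[f | m] ω ∂μ = ∫ ω, μ[g * f | m] ω ∂μ :=
          integral_congr_ae (condExp_stronglyMeasurable_mul_of_bound hm hg hf c hg_bound).symm
      _ = ∫ ω, g ω * f ω ∂μ := integral_condExp hm
  simp_rw [mul_sub]
  rw [integral_sub (hf.bdd_mul hg' hg_bound) (integrable_condExp.bdd_mul hg' hg_bound),
    pull_out, sub_self]

theorem ae_norm_one_sub_two_condExp_le {f : Ω → ℝ} (hf_bound : ∀ᵐ ω ∂μ, |f ω| ≤ 1) :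
    ∀ᵐ ω ∂μ, ‖1 - 2 * μ[f | m] ω‖ ≤ 3 := by
  filter_upwards [ae_bdd_abs_condExp_of_ae_bdd_abs (m := m) hf_bound] with ω hω
  rw [Real.norm_eq_abs, abs_le] at *
  constructor <;> linarith

theorem integral_abs_condExp_sub_condExp_le_half [IsProbabilityMeasure μ]
    {m₁ m₂ : MeasurableSpace Ω} (h₁ : m₁ ≤ m₀) (h₂ : m₂ ≤ m₀) {f : Ω → ℝ} (hf : Integrable f μ)
    (hf_mem : ∀ᵐ ω ∂μ, f ω ∈ Set.Icc 0 1) :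
    ∫ ω, |μ[f | m₁] ω - μ[f | m₂] ω| ∂μ ≤ 1 / 2 := by
  have hf_bound : ∀ᵐ ω ∂μ, |f ω| ≤ 1 := by
    filter_upwards [hf_mem] with ω hω
    exact abs_le.2 ⟨by linarith [hω.1], hω.2⟩
  have correction : ∀ m ≤ m₀,
      Integrable (fun ω => (1 - 2 * μ[f | m] ω) * (f ω - μ[f | m] ω)) μ ∧
        ∫ ω, (1 - 2 * μ[f | m] ω) * (f ω - μ[f | m] ω) ∂μ = 0 := by
    intro m hm
    have hg : StronglyMeasurable[m] fun ω => 1 - 2 * μ[f | m] ω :=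
      stronglyMeasurable_const.sub (stronglyMeasurable_const.mul stronglyMeasurable_condExp)
    have hg_bound := ae_norm_one_sub_two_condExp_le (m := m) hf_bound
    exact ⟨(hf.sub integrable_condExp).bdd_mul (hg.mono hm).aestronglyMeasurable hg_bound,
      integral_mul_sub_condExp_eq_zero hm hg hg_bound hf⟩
  obtain ⟨int₁, zero₁⟩ := correction m₁ h₁
  obtain ⟨int₂, zero₂⟩ := correction m₂ h₂
  calc ∫ ω, |μ[f | m₁] ω - μ[f | m₂] ω| ∂μ
      ≤ ∫ ω, (1 / 2 + (1 - 2 * μ[f | m₁] ω) * (f ω - μ[f | m₁] ω)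
          + (1 - 2 * μ[f | m₂] ω) * (f ω - μ[f | m₂] ω)) ∂μ := by
        refine integral_mono_ae (integrable_condExp.sub integrable_condExp).abs
          (((integrable_const _).fun_add int₁).fun_add int₂) ?_
        filter_upwards [hf_mem] with ω hω
        exact abs_sub_le_half_add_mul_sub hω.1 hω.2
    _ = 1 / 2 := by
        rw [integral_add ((integrable_const _).fun_add int₁) int₂,
          integral_add (integrable_const _) int₁, zero₁, zero₂]
        simp

end CondExp

theorem IsCoherentPair.integral_abs_sub_le_half {Ω : Type} [MeasurableSpace Ω] {μ : Measure Ω}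
    [IsProbabilityMeasure μ] {X Y : Ω → ℝ} (h : IsCoherentPair μ X Y) :
    ∫ ω, |X ω - Y ω| ∂μ ≤ 1 / 2 := by
  obtain ⟨A, G, H, hA, hG, hH, hX, hY⟩ := h
  have h_ae : (fun ω => |X ω - Y ω|) =ᵐ[μ]
      fun ω => |μ[A.indicator (fun _ => 1) | G] ω - μ[A.indicator (fun _ => 1) | H] ω| := by
    filter_upwards [hX, hY] with ω hXω hYω
    rw [hXω, hYω]
  rw [integral_congr_ae h_ae]
  -- `hA` is measurability for `H`, the innermost instance in scope in `IsCoherentPair`.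
  refine integral_abs_condExp_sub_condExp_le_half hG hH ((integrable_const 1).indicator (hH A hA))
    (ae_of_all _ fun ω => ?_)
  by_cases hω : ω ∈ A <;> simp [hω]

theorem isCoherentPair_measureReal_indicator {Ω : Type} [m₀ : MeasurableSpace Ω]
    {μ : Measure Ω} [IsProbabilityMeasure μ] {A : Set Ω} (hA : MeasurableSet A) :
    IsCoherentPair μ (fun _ => μ.real A) (A.indicator fun _ => 1) := by
  -- The indicator goes second: `A` only has to be measurable for the second σ-algebra.
  refine ⟨A, ⊥, m₀, hA, bot_le, le_rfl, ?_, ?_⟩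
  · rw [condExp_bot, integral_indicator_const _ hA, smul_eq_mul, mul_one]
  · rw [condExp_of_stronglyMeasurable le_rfl (stronglyMeasurable_const.indicator hA)
      ((integrable_const 1).indicator hA)]

theorem half_mem_coherentAbsVals : (1 / 2 : ℝ) ∈ coherentAbsVals := by
  let μ := (PMF.uniformOfFintype Bool).toMeasure
  have hA : MeasurableSet {true} := measurableSet_singleton true
  have hμA : μ.real {true} = 1 / 2 := by
    simp [μ, measureReal_def, PMF.toMeasure_uniformOfFintype_apply _ hA]
  refine ⟨Bool, _, μ, inferInstance, _, _, isCoherentPair_measureReal_indicator hA, ?_⟩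
  have half_dist : ∀ b, |μ.real {true} - ({true} : Set Bool).indicator (fun _ => (1 : ℝ)) b|
      = 1 / 2 := by
    intro b
    cases b <;> norm_num [hμA]
  simp only [half_dist, integral_const, probReal_univ]
  norm_num

/-- Every coherent pair satisfies `E|X - Y| ≤ 1/2`, and the supremum of `E|X - Y|` over all
coherent pairs equals `1/2`, the bound being attained. -/
theorem sup_coherent_abs_eq_half :
    (∀ (Ω : Type) (m0 : MeasurableSpace Ω) (μ : Measure Ω), IsProbabilityMeasure μ →
        ∀ X Y : Ω → ℝ, IsCoherentPair μ X Y → ∫ ω, |X ω - Y ω| ∂μ ≤ 1 / 2) ∧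
    IsGreatest coherentAbsVals (1 / 2) := by
  refine ⟨fun _ _ _ _ _ _ h => h.integral_abs_sub_le_half, half_mem_coherentAbsVals, ?_⟩
  rintro r ⟨Ω, m0, μ, hμ, X, Y, h, rfl⟩
  exact h.integral_abs_sub_le_half
end

section
/- Fix a probability space (Ω, F, P) and an event A ∈ F. For any sub-σ-algebras G, H ⊆ F, setting X = E[1_A | G] and Y = E[1_A | H], one has E|X-Y|² ≤ P(A)(1 - P(A)). -/
/-!
Centre the indicator: for `g = 1_A - P(A)` one has `X - Y = E[g | G] - E[g | H]` almost surely,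
and `E[g²] = Var(1_A) = P(A)(1 - P(A))`. In `L²` a conditional expectation is an orthogonal
projection, so `a = E[g | G]` satisfies `⟪g - a, a⟫ = 0`: it lies on the sphere with diameter
`[0, g]` (Thales). So does `E[g | H]`, and two points of that sphere are at distance at most its
diameter `‖g‖₂`.
-/

open MeasureTheory ProbabilityTheory

open scoped RealInnerProductSpace

section Thales

variable {E : Type*} [NormedAddCommGroup E] [InnerProductSpace ℝ E] {u a b : E}

lemma norm_sub_half_smul_eq_of_inner_sub_self_eq_zero (ha : ⟪u - a, a⟫ = 0) :
    ‖a - (2⁻¹ : ℝ) • u‖ = ‖u‖ / 2 := by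
  rw [← sq_eq_sq₀ (norm_nonneg _) (by positivity), norm_sub_sq_real, inner_smul_right,
    norm_smul, mul_pow, Real.norm_of_nonneg (by norm_num)]
  rw [inner_sub_left, real_inner_self_eq_norm_sq, real_inner_comm] at ha
  linarith

lemma norm_sub_le_of_inner_sub_self_eq_zero (ha : ⟪u - a, a⟫ = 0) (hb : ⟪u - b, b⟫ = 0) :
    ‖a - b‖ ≤ ‖u‖ :=
  calc ‖a - b‖ ≤ ‖a - (2⁻¹ : ℝ) • u‖ + ‖b - (2⁻¹ : ℝ) • u‖ := by
        simpa only [dist_eq_norm] using dist_triangle_right a b ((2⁻¹ : ℝ) • u)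
    _ = ‖u‖ := by
      rw [norm_sub_half_smul_eq_of_inner_sub_self_eq_zero ha,
        norm_sub_half_smul_eq_of_inner_sub_self_eq_zero hb]
      ring

end Thales

namespace MeasureTheory

section CondExpL2

variable {Ω E : Type*} [NormedAddCommGroup E] [InnerProductSpace ℝ E] [CompleteSpace E]
  {m m' m0 : MeasurableSpace Ω} {μ : Measure Ω}

lemma inner_sub_condExpL2_self (hm : m ≤ m0) (f : Ω →₂[μ] E) :
    ⟪f - condExpL2 E ℝ hm f, condExpL2 E ℝ hm f⟫ = 0 := by
  rw [inner_sub_left, ← inner_condExpL2_eq_inner_fun hm f _ (aestronglyMeasurable_condExpL2 hm f),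
    sub_self]

lemma norm_condExpL2_sub_condExpL2_le (hm : m ≤ m0) (hm' : m' ≤ m0) (f : Ω →₂[μ] E) :
    ‖(condExpL2 E ℝ hm f : Ω →₂[μ] E) - condExpL2 E ℝ hm' f‖ ≤ ‖f‖ :=
  norm_sub_le_of_inner_sub_self_eq_zero (inner_sub_condExpL2_self hm f)
    (inner_sub_condExpL2_self hm' f)

end CondExpL2

lemma L2.norm_sq_eq_integral_sq {Ω : Type*} {m0 : MeasurableSpace Ω} {μ : Measure Ω}
    (f : Ω →₂[μ] ℝ) : ‖f‖ ^ 2 = ∫ ω, f ω ^ 2 ∂μ := by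
  rw [← real_inner_self_eq_norm_sq, L2.inner_def]
  simp only [RCLike.inner_apply, conj_trivial, sq]

lemma integral_sq_condExp_sub_condExp_le {Ω : Type*} {m m' m0 : MeasurableSpace Ω}
    {μ : Measure Ω} [IsFiniteMeasure μ] (hm : m ≤ m0) (hm' : m' ≤ m0) {g : Ω → ℝ}
    (hg : MemLp g 2 μ) :
    ∫ ω, (μ[g | m] ω - μ[g | m'] ω) ^ 2 ∂μ ≤ ∫ ω, g ω ^ 2 ∂μ := by
  set f := hg.toLp g
  set d : Ω →₂[μ] ℝ := (condExpL2 ℝ ℝ hm f : Ω →₂[μ] ℝ) - condExpL2 ℝ ℝ hm' f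
  have hd : (fun ω => μ[g | m] ω - μ[g | m'] ω) =ᵐ[μ] d := by
    filter_upwards [hg.condExpL2_ae_eq_condExp (𝕜 := ℝ) hm,
      hg.condExpL2_ae_eq_condExp (𝕜 := ℝ) hm',
      Lp.coeFn_sub (condExpL2 ℝ ℝ hm f : Ω →₂[μ] ℝ) (condExpL2 ℝ ℝ hm' f)]
      with ω hω hω' hω_sub
    rw [hω_sub, Pi.sub_apply, hω, hω']
  calc ∫ ω, (μ[g | m] ω - μ[g | m'] ω) ^ 2 ∂μ = ‖d‖ ^ 2 := by
        rw [L2.norm_sq_eq_integral_sq]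
        exact integral_congr_ae (hd.fun_comp (· ^ 2))
    _ ≤ ‖f‖ ^ 2 := by
        gcongr
        exact norm_condExpL2_sub_condExpL2_le hm hm' f
    _ = ∫ ω, g ω ^ 2 ∂μ := by
        rw [L2.norm_sq_eq_integral_sq]
        exact integral_congr_ae (hg.coeFn_toLp.fun_comp (· ^ 2))

end MeasureTheory

lemma integral_sq_indicator_one_sub_measureReal {Ω : Type*} {m0 : MeasurableSpace Ω}
    {μ : Measure Ω} [IsProbabilityMeasure μ] {A : Set Ω} (hA : MeasurableSet A) :
    ∫ ω, (A.indicator (fun _ => 1) ω - μ.real A) ^ 2 ∂μ = μ.real A * (1 - μ.real A) := by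
  have h_mem : MemLp (A.indicator fun _ => (1 : ℝ)) 2 μ := memLp_indicator_const 2 hA 1 (by simp)
  have h_mean : μ[A.indicator fun _ => (1 : ℝ)] = μ.real A := by
    simp [integral_indicator_const _ hA]
  have h_idem : (A.indicator fun _ => (1 : ℝ)) ^ 2 = A.indicator fun _ => 1 := by
    ext ω
    by_cases hω : ω ∈ A <;> simp [hω]
  rw [← h_mean, ← variance_eq_integral h_mem.aemeasurable, variance_eq_sub h_mem, h_idem]
  ring

/-- For a fixed probability space and event `A`, and any sub-σ-algebras `G, H`, the conditional
probabilities `X = E[1_A | G]` and `Y = E[1_A | H]` satisfy `E|X - Y|² ≤ P(A)(1 - P(A))`. -/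
theorem integral_sq_diff_condexp_le {Ω : Type} [m0 : MeasurableSpace Ω] (μ : Measure Ω)
    [IsProbabilityMeasure μ] (A : Set Ω) (hA : MeasurableSet A)
    (G H : MeasurableSpace Ω) (hG : G ≤ m0) (hH : H ≤ m0) :
    ∫ ω, |(μ[A.indicator (fun _ => (1 : ℝ)) | G]) ω -
          (μ[A.indicator (fun _ => (1 : ℝ)) | H]) ω| ^ 2 ∂μ ≤
      (μ A).toReal * (1 - (μ A).toReal) := by
  set p := μ.real A
  set g : Ω → ℝ := A.indicator (fun _ => 1) - fun _ => p
  have h_center (m : MeasurableSpace Ω) (hm : m ≤ m0) :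
      μ[g | m] =ᵐ[μ] μ[A.indicator (fun _ => (1 : ℝ)) | m] - fun _ => p := by
    rw [← condExp_const (μ := μ) hm p]
    exact condExp_sub ((integrable_const 1).indicator hA) (integrable_const p) m
  calc _ = ∫ ω, (μ[g | G] ω - μ[g | H] ω) ^ 2 ∂μ := by
        refine integral_congr_ae ?_
        filter_upwards [h_center G hG, h_center H hH] with ω hωG hωH
        simp [hωG, hωH, sq_abs]
    _ ≤ ∫ ω, g ω ^ 2 ∂μ := integral_sq_condExp_sub_condExp_le hG hH
        ((memLp_indicator_const 2 hA 1 (by simp)).sub (memLp_const p))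
    _ = p * (1 - p) := integral_sq_indicator_one_sub_measureReal hA
end

section
/- For every real α with 0 ≤ α ≤ 2, the supremum of E|X-Y|^α over all coherent pairs (X,Y) equals 2^{-α}, and the same supremum restricted to coherent pairs with X independent of Y also equals 2^{-α}. In particular, every coherent pair satisfies E|X-Y|^α ≤ 2^{-α}. -/
/-!
Write `X = E[1_A | G]`, `Y = E[1_A | H]` and `p = P(A)`. Since `X` and `Y` are orthogonal
projections of `1_A`, `E[X (1_A - X)] = E[Y (1_A - Y)] = 0`, and expanding squares gives
`E(X - Y)² + E(X + Y - 1_A)² = E 1_A² = p`. As `E(X + Y - 1_A) = p`, the second term is at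
least `p²`, so `E(X - Y)² ≤ p - p² ≤ 1/4`. Jensen's inequality for the concave map
`t ↦ t ^ (α/2)` turns this into `E|X - Y|^α ≤ 2^{-α}`. The bound is attained by the independent
pair `X ≡ 1/2 = E[1_A | ⊥]`, `Y = 1_A = E[1_A | F]` with `P(A) = 1/2`.
-/

open MeasureTheory ProbabilityTheory

/-- The set of values `E|X - Y|^α` over all coherent pairs `(X, Y)`. -/
def coherentRPowVals (α : ℝ) : Set ℝ :=
  { r : ℝ | ∃ (Ω : Type) (m0 : MeasurableSpace Ω) (μ : Measure Ω),
      IsProbabilityMeasure μ ∧ ∃ X Y : Ω → ℝ,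
        IsCoherentPair μ X Y ∧ r = ∫ ω, |X ω - Y ω| ^ α ∂μ }

/-- The set of values `E|X - Y|^α` over all coherent pairs `(X, Y)` with `X` and `Y`
independent. -/
def coherentIndepRPowVals (α : ℝ) : Set ℝ :=
  { r : ℝ | ∃ (Ω : Type) (m0 : MeasurableSpace Ω) (μ : Measure Ω),
      IsProbabilityMeasure μ ∧ ∃ X Y : Ω → ℝ,
        IsCoherentPair μ X Y ∧ IndepFun X Y μ ∧ r = ∫ ω, |X ω - Y ω| ^ α ∂μ }

lemma Real.rpow_le_one_add {x p : ℝ} (hx : 0 ≤ x) (hp₀ : 0 ≤ p) (hp₁ : p ≤ 1) :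
    x ^ p ≤ 1 + x := by
  have h := rpow_one_add_le_one_add_mul_self (s := x - 1) (by linarith) hp₀ hp₁
  rw [add_sub_cancel] at h
  nlinarith

section Inequalities

variable {Ω : Type*} {m₀ : MeasurableSpace Ω} {μ : Measure Ω}

lemma integral_rpow_le_rpow_integral [IsProbabilityMeasure μ] {f : Ω → ℝ} (hf₀ : 0 ≤ᵐ[μ] f)
    (hf : Integrable f μ) {p : ℝ} (hp₀ : 0 ≤ p) (hp₁ : p ≤ 1) :
    ∫ ω, f ω ^ p ∂μ ≤ (∫ ω, f ω ∂μ) ^ p := by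
  have hfp : Integrable (fun ω ↦ f ω ^ p) μ := by
    refine ((integrable_const 1).add hf).mono'
      (hf.1.aemeasurable.pow_const p).aestronglyMeasurable ?_
    filter_upwards [hf₀] with ω hω
    rw [Real.norm_of_nonneg (Real.rpow_nonneg hω p)]
    exact Real.rpow_le_one_add hω hp₀ hp₁
  exact (Real.concaveOn_rpow hp₀ hp₁).le_map_integral
    (Real.continuous_rpow_const hp₀).continuousOn isClosed_Ici hf₀ hf hfp

lemma sq_integral_le_integral_sq [IsProbabilityMeasure μ] {f : Ω → ℝ} (hf : MemLp f 2 μ) :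
    (∫ ω, f ω ∂μ) ^ 2 ≤ ∫ ω, f ω ^ 2 ∂μ := by
  have h := variance_nonneg f μ
  rw [variance_eq_sub hf] at h
  simpa [sub_nonneg] using h

lemma integral_condExp_mul_sub_condExp [IsFiniteMeasure μ] {m : MeasurableSpace Ω} (hm : m ≤ m₀)
    {f : Ω → ℝ} (hf : MemLp f 2 μ) : ∫ ω, μ[f|m] ω * (f ω - μ[f|m] ω) ∂μ = 0 := by
  have hcf : MemLp (μ[f|m]) 2 μ := hf.condExp one_le_two
  have hmul : ∫ ω, μ[f|m] ω * f ω ∂μ = ∫ ω, μ[f|m] ω * μ[f|m] ω ∂μ := calc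
    ∫ ω, μ[f|m] ω * f ω ∂μ = ∫ ω, μ[μ[f|m] * f|m] ω ∂μ := (integral_condExp hm).symm
    _ = ∫ ω, μ[f|m] ω * μ[f|m] ω ∂μ := integral_congr_ae <|
      condExp_mul_of_stronglyMeasurable_left stronglyMeasurable_condExp
        (hcf.integrable_mul hf) (hf.integrable one_le_two)
  simp_rw [mul_sub]
  rw [integral_sub (by exact hcf.integrable_mul hf) (by exact hcf.integrable_mul hcf), hmul,
    sub_self]

lemma integral_sub_condExp_sq_add_integral_add_condExp_sq [IsFiniteMeasure μ]
    {m₁ m₂ : MeasurableSpace Ω} (h₁ : m₁ ≤ m₀) (h₂ : m₂ ≤ m₀) {f : Ω → ℝ} (hf : MemLp f 2 μ) :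
    ∫ ω, (μ[f|m₁] ω - μ[f|m₂] ω) ^ 2 ∂μ + ∫ ω, (μ[f|m₁] ω + μ[f|m₂] ω - f ω) ^ 2 ∂μ =
      ∫ ω, f ω ^ 2 ∂μ := by
  set g₁ := μ[f|m₁]
  set g₂ := μ[f|m₂]
  have hg₁ : MemLp g₁ 2 μ := hf.condExp one_le_two
  have hg₂ : MemLp g₂ 2 μ := hf.condExp one_le_two
  have hi₁ : Integrable (fun ω ↦ g₁ ω * (f ω - g₁ ω)) μ := hg₁.integrable_mul (hf.sub hg₁)
  have hi₂ : Integrable (fun ω ↦ g₂ ω * (f ω - g₂ ω)) μ := hg₂.integrable_mul (hf.sub hg₂)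
  have hs₁ : Integrable (fun ω ↦ (g₁ ω - g₂ ω) ^ 2) μ := (hg₁.sub hg₂).integrable_sq
  have hs₂ : Integrable (fun ω ↦ (g₁ ω + g₂ ω - f ω) ^ 2) μ :=
    ((hg₁.add hg₂).sub hf).integrable_sq
  have hpt : ∀ ω, (g₁ ω - g₂ ω) ^ 2 + (g₁ ω + g₂ ω - f ω) ^ 2 =
      f ω ^ 2 - 2 * (g₁ ω * (f ω - g₁ ω)) - 2 * (g₂ ω * (f ω - g₂ ω)) := fun ω ↦ by ring
  rw [← integral_add hs₁ hs₂]
  simp only [hpt]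
  rw [integral_sub (by exact hf.integrable_sq.sub (hi₁.const_mul 2)) (hi₂.const_mul 2),
    integral_sub hf.integrable_sq (hi₁.const_mul 2), integral_const_mul, integral_const_mul,
    integral_condExp_mul_sub_condExp h₁ hf, integral_condExp_mul_sub_condExp h₂ hf]
  ring

end Inequalities

section Coherent

variable {Ω : Type} [MeasurableSpace Ω] {μ : Measure Ω} [IsProbabilityMeasure μ] {X Y : Ω → ℝ}

lemma IsCoherentPair.memLp_sub (h : IsCoherentPair μ X Y) : MemLp (X - Y) 2 μ := by
  -- `A` is measurable for the last σ-algebra in scope when `IsCoherentPair` is elaborated, i.e. `H`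
  obtain ⟨A, G, H, hA, -, hH, hX, hY⟩ := h
  have hZ : MemLp (A.indicator fun _ ↦ (1 : ℝ)) 2 μ := (memLp_const 1).indicator (hH _ hA)
  exact ((hZ.condExp one_le_two).sub (hZ.condExp one_le_two)).ae_eq (hX.sub hY).symm

lemma IsCoherentPair.integral_sub_sq_le (h : IsCoherentPair μ X Y) :
    ∫ ω, (X ω - Y ω) ^ 2 ∂μ ≤ 1 / 4 := by
  obtain ⟨A, G, H, hA, hG, hH, hX, hY⟩ := h
  set Z := A.indicator (fun _ ↦ (1 : ℝ))
  have hZ : MemLp Z 2 μ := (memLp_const 1).indicator (hH _ hA)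
  have hZ_sq : ∀ ω, Z ω ^ 2 = Z ω := fun ω ↦ by
    by_cases hω : ω ∈ A <;> simp [Z, hω]
  set p := ∫ ω, Z ω ∂μ
  set W := fun ω ↦ μ[Z|G] ω + μ[Z|H] ω - Z ω
  have hW : MemLp W 2 μ := ((hZ.condExp one_le_two).add (hZ.condExp one_le_two)).sub hZ
  have hW_int : ∫ ω, W ω ∂μ = p := by
    rw [integral_sub (by exact integrable_condExp.add integrable_condExp)
      (hZ.integrable one_le_two), integral_add integrable_condExp integrable_condExp,
      integral_condExp hG, integral_condExp hH]
    ring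
  have hsum := integral_sub_condExp_sq_add_integral_add_condExp_sq hG hH hZ
  simp only [hZ_sq] at hsum
  have hXY : ∫ ω, (X ω - Y ω) ^ 2 ∂μ = ∫ ω, (μ[Z|G] ω - μ[Z|H] ω) ^ 2 ∂μ := by
    refine integral_congr_ae ?_
    filter_upwards [hX, hY] with ω hXω hYω
    rw [hXω, hYω]
  calc ∫ ω, (X ω - Y ω) ^ 2 ∂μ = p - ∫ ω, W ω ^ 2 ∂μ := by rw [hXY]; linarith
    _ ≤ p - p ^ 2 := by rw [← hW_int]; linarith [sq_integral_le_integral_sq hW]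
    _ ≤ 1 / 4 := by nlinarith [sq_nonneg (2 * p - 1)]

lemma IsCoherentPair.integral_abs_sub_rpow_le (h : IsCoherentPair μ X Y) {α : ℝ} (hα₀ : 0 ≤ α)
    (hα₂ : α ≤ 2) : ∫ ω, |X ω - Y ω| ^ α ∂μ ≤ 2 ^ (-α) := by
  have hsq_nonneg : ∀ ω, 0 ≤ (X ω - Y ω) ^ 2 := fun ω ↦ sq_nonneg _
  calc ∫ ω, |X ω - Y ω| ^ α ∂μ = ∫ ω, ((X ω - Y ω) ^ 2) ^ (α / 2) ∂μ := by
        congr 1 with ω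
        rw [← sq_abs, ← Real.rpow_natCast, ← Real.rpow_mul (abs_nonneg _)]
        ring_nf
    _ ≤ (∫ ω, (X ω - Y ω) ^ 2 ∂μ) ^ (α / 2) :=
        integral_rpow_le_rpow_integral (ae_of_all _ hsq_nonneg) h.memLp_sub.integrable_sq
          (by linarith) (by linarith)
    _ ≤ (1 / 4) ^ (α / 2) :=
        Real.rpow_le_rpow (integral_nonneg hsq_nonneg) h.integral_sub_sq_le (by linarith)
    _ = 2 ^ (-α) := by
        rw [show (1 / 4 : ℝ) = 2 ^ (-2 : ℝ) by norm_num, ← Real.rpow_mul zero_le_two]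
        ring_nf

lemma isCoherentPair_const_indicator {A : Set Ω} (hA : MeasurableSet A) :
    IsCoherentPair μ (fun _ ↦ μ.real A) (A.indicator fun _ ↦ 1) := by
  refine ⟨A, ⊥, ‹_›, hA, bot_le, le_rfl, ?_, ?_⟩
  · rw [condExp_bot, integral_indicator_const (1 : ℝ) hA, smul_eq_mul, mul_one]
  · rw [condExp_of_stronglyMeasurable le_rfl (stronglyMeasurable_const.indicator hA)
      ((integrable_const 1).indicator hA)]

lemma integral_abs_measureReal_sub_indicator_rpow {A : Set Ω} (hA : μ.real A = 1 / 2) (α : ℝ) :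
    ∫ ω, |μ.real A - A.indicator (fun _ ↦ (1 : ℝ)) ω| ^ α ∂μ = 2 ^ (-α) := by
  have h : ∀ ω, |μ.real A - A.indicator (fun _ ↦ (1 : ℝ)) ω| = 2⁻¹ := fun ω ↦ by
    by_cases hω : ω ∈ A <;> norm_num [hA, hω, abs_of_nonneg, abs_of_nonpos]
  simp [h, Real.rpow_neg, Real.inv_rpow]

end Coherent

lemma coherentIndepRPowVals_subset (α : ℝ) : coherentIndepRPowVals α ⊆ coherentRPowVals α :=
  fun _ ⟨Ω, m0, μ, hμ, X, Y, h, _, hr⟩ ↦ ⟨Ω, m0, μ, hμ, X, Y, h, hr⟩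

/-- For `0 ≤ α ≤ 2`, the supremum of `E|X - Y|^α` over all coherent pairs equals `2^{-α}`, the
same supremum restricted to independent coherent pairs also equals `2^{-α}`, and in particular
every coherent pair satisfies `E|X - Y|^α ≤ 2^{-α}`. -/
theorem sup_coherent_rpow_eq (α : ℝ) (hα0 : 0 ≤ α) (hα2 : α ≤ 2) :
    IsLUB (coherentRPowVals α) ((2 : ℝ) ^ (-α)) ∧
    IsLUB (coherentIndepRPowVals α) ((2 : ℝ) ^ (-α)) ∧
    (∀ (Ω : Type) (m0 : MeasurableSpace Ω) (μ : Measure Ω), IsProbabilityMeasure μ →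
      ∀ X Y : Ω → ℝ, IsCoherentPair μ X Y →
        ∫ ω, |X ω - Y ω| ^ α ∂μ ≤ (2 : ℝ) ^ (-α)) := by
  have hle : ∀ (Ω : Type) (m0 : MeasurableSpace Ω) (μ : Measure Ω), IsProbabilityMeasure μ →
      ∀ X Y : Ω → ℝ, IsCoherentPair μ X Y → ∫ ω, |X ω - Y ω| ^ α ∂μ ≤ (2 : ℝ) ^ (-α) :=
    fun _ _ _ _ _ _ h ↦ h.integral_abs_sub_rpow_le hα0 hα2
  have hupper : (2 : ℝ) ^ (-α) ∈ upperBounds (coherentRPowVals α) := by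
    rintro _ ⟨Ω, m0, μ, hμ, X, Y, h, rfl⟩
    exact hle Ω m0 μ hμ X Y h
  set coin := (PMF.uniformOfFintype Bool).toMeasure
  have hcoin : coin.real {true} = 1 / 2 := by simp [coin, measureReal_def]
  have hmem : (2 : ℝ) ^ (-α) ∈ coherentIndepRPowVals α :=
    ⟨Bool, _, coin, inferInstance, _, _,
      isCoherentPair_const_indicator (measurableSet_singleton true), indepFun_const_left _ _,
      (integral_abs_measureReal_sub_indicator_rpow hcoin α).symm⟩
  exact ⟨IsGreatest.isLUB ⟨coherentIndepRPowVals_subset α hmem, hupper⟩,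
    IsGreatest.isLUB ⟨hmem, fun _ hr ↦ hupper (coherentIndepRPowVals_subset α hr)⟩, hle⟩
end

section
/- Fix a probability space (Ω, F, P), an event A ∈ F, and n ≥ 1 sub-σ-algebras G_1, ..., G_n ⊆ F. Setting X_i = E[1_A | G_i] for i = 1, ..., n, one has (1/2) Σ_{i≠j} E|X_i - X_j|² ≤ (n²/4) · P(A)(1 - P(A)). -/
/-!
Write `X i = E[f | G i]` and `S = ∑ i, X i`. Every `X i` has mean `E f`, and by the pull-out
property `Cov(f, X i) = Var(X i)`. Hence `E|X i - X j|² = Var(X i - X j)`, and expanding the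
variances over ordered pairs turns the left-hand side into `n Cov(f, S) - Var S`. This is at most
`n²/4 · Var f` since `Var(S - (n/2) f) ≥ 0`, and for `f = 1_A` the variance is `P(A)(1 - P(A))`.
-/

open MeasureTheory ProbabilityTheory Finset

namespace ProbabilityTheory

variable {Ω : Type*} {m m₀ : MeasurableSpace Ω} {μ : Measure[m₀] Ω}

lemma integral_mul_condExp_self [IsFiniteMeasure μ] (hm : m ≤ m₀) {X : Ω → ℝ}
    (hX : MemLp X 2 μ) : μ[X * μ[X | m]] = μ[μ[X | m] ^ 2] := by
  have hint : Integrable (μ[X | m] * X) μ := (hX.condExp one_le_two).integrable_mul hX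
  calc μ[X * μ[X | m]] = μ[μ[X | m] * X] := by rw [mul_comm]
    _ = μ[μ[μ[X | m] * X | m]] := (integral_condExp hm).symm
    _ = μ[μ[X | m] * μ[X | m]] := by
      have hpull : μ[μ[X | m] * X | m] =ᵐ[μ] μ[X | m] * μ[X | m] :=
        condExp_mul_of_stronglyMeasurable_left stronglyMeasurable_condExp hint
          (hX.integrable one_le_two)
      exact integral_congr_ae hpull
    _ = μ[μ[X | m] ^ 2] := by rw [sq]

lemma covariance_condExp_self [IsProbabilityMeasure μ] (hm : m ≤ m₀) {X : Ω → ℝ}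
    (hX : MemLp X 2 μ) : cov[X, μ[X | m]; μ] = Var[μ[X | m]; μ] := by
  rw [covariance_eq_sub hX (hX.condExp one_le_two), variance_eq_sub (hX.condExp one_le_two),
    integral_mul_condExp_self hm hX, integral_condExp hm]
  ring

lemma half_sum_offDiag_variance_sub {ι : Type*} [Fintype ι] [DecidableEq ι] [IsFiniteMeasure μ]
    {X : ι → Ω → ℝ} (hX : ∀ i, MemLp (X i) 2 μ) :
    (1 / 2 : ℝ) * ∑ p ∈ univ.offDiag, Var[X p.1 - X p.2; μ] =
      Fintype.card ι * ∑ i, Var[X i; μ] - Var[∑ i, X i; μ] := by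
  have hdiag : ∑ p ∈ univ.offDiag, Var[X p.1 - X p.2; μ] = ∑ i, ∑ j, Var[X i - X j; μ] := by
    rw [← sum_product', univ_product_univ]
    refine sum_subset (subset_univ _) fun p _ hp => ?_
    obtain ⟨i, j⟩ := p
    obtain rfl : i = j := by simpa using hp
    simp
  simp_rw [hdiag, variance_sub (hX _) (hX _), sum_add_distrib, sum_sub_distrib, ← mul_sum,
    variance_sum hX, sum_const, card_univ, nsmul_eq_mul, ← mul_sum]
  ring

lemma mul_covariance_sub_variance_le [IsFiniteMeasure μ] {U V : Ω → ℝ} (hU : MemLp U 2 μ)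
    (hV : MemLp V 2 μ) (c : ℝ) : c * cov[U, V; μ] - Var[V; μ] ≤ c ^ 2 / 4 * Var[U; μ] := by
  have h := variance_nonneg (V - (c / 2) • U) μ
  rw [variance_sub hV (hU.const_smul _), variance_smul, covariance_smul_right,
    covariance_comm] at h
  linarith

lemma variance_indicator_one [IsProbabilityMeasure μ] {A : Set Ω} (hA : MeasurableSet A) :
    Var[A.indicator (fun _ => (1 : ℝ)); μ] = μ.real A * (1 - μ.real A) := by
  have hsq : A.indicator (fun _ => (1 : ℝ)) ^ 2 = A.indicator (fun _ => 1) := by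
    ext ω
    by_cases hω : ω ∈ A <;> simp [hω]
  rw [variance_eq_sub (memLp_indicator_const 2 hA 1 (.inr (measure_ne_top μ A))), hsq,
    integral_indicator_const _ hA]
  simp only [smul_eq_mul, mul_one]
  ring

theorem half_sum_offDiag_integral_sq_sub_condExp_le [IsProbabilityMeasure μ] {ι : Type*}
    [Fintype ι] [DecidableEq ι] {f : Ω → ℝ} (hf : MemLp f 2 μ) {G : ι → MeasurableSpace Ω}
    (hG : ∀ i, G i ≤ m₀) :
    (1 / 2 : ℝ) * ∑ p ∈ univ.offDiag, ∫ ω, (μ[f | G p.1] ω - μ[f | G p.2] ω) ^ 2 ∂μ ≤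
      Fintype.card ι ^ 2 / 4 * Var[f; μ] := by
  set X := fun i => μ[f | G i]
  have hX : ∀ i, MemLp (X i) 2 μ := fun i => hf.condExp one_le_two
  have hmean : ∀ i, μ[X i] = μ[f] := fun i => integral_condExp (hG i)
  have hsq : ∀ i j, ∫ ω, (X i ω - X j ω) ^ 2 ∂μ = Var[X i - X j; μ] := fun i j =>
    (variance_of_integral_eq_zero ((hX i).sub (hX j)).aemeasurable <| by
      rw [integral_sub' ((hX i).integrable one_le_two) ((hX j).integrable one_le_two), hmean,
        hmean, sub_self]).symm
  have hvar : ∀ i, Var[X i; μ] = cov[f, X i; μ] := fun i =>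
    (covariance_condExp_self (hG i) hf).symm
  calc (1 / 2 : ℝ) * ∑ p ∈ univ.offDiag, ∫ ω, (X p.1 ω - X p.2 ω) ^ 2 ∂μ
      = Fintype.card ι * cov[f, ∑ i, X i; μ] - Var[∑ i, X i; μ] := by
        simp_rw [hsq, half_sum_offDiag_variance_sub hX, hvar, covariance_sum_right hX hf]
    _ ≤ Fintype.card ι ^ 2 / 4 * Var[f; μ] :=
        mul_covariance_sub_variance_le hf (memLp_finsetSum' _ fun i _ => hX i) _

end ProbabilityTheory

theorem sum_sq_diff_condexp_le_general {Ω : Type} [m0 : MeasurableSpace Ω] (μ : Measure Ω)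
    [IsProbabilityMeasure μ] (A : Set Ω) (hA : MeasurableSet A)
    (n : ℕ) (G : Fin n → MeasurableSpace Ω) (hG : ∀ i, G i ≤ m0) :
    (1 / 2 : ℝ) * ∑ p ∈ Finset.univ.offDiag,
        ∫ ω, |(μ[A.indicator (fun _ => (1 : ℝ)) | G p.1]) ω -
              (μ[A.indicator (fun _ => (1 : ℝ)) | G p.2]) ω| ^ 2 ∂μ ≤
      (n : ℝ) ^ 2 / 4 * ((μ A).toReal * (1 - (μ A).toReal)) := by
  have h := half_sum_offDiag_integral_sq_sub_condExp_le
    (memLp_indicator_const 2 hA (1 : ℝ) (.inr (measure_ne_top μ A))) hG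
  simp_rw [sq_abs]
  rwa [variance_indicator_one hA, Fintype.card_fin, measureReal_def] at h

/-- For `n` conditional probabilities `X_i = E[1_A | G_i]` of the same event `A`, one has
`(1/2) Σ_{i ≠ j} E|X_i - X_j|² ≤ (n²/4) · P(A)(1 - P(A))`. -/
theorem sum_sq_diff_condexp_le {Ω : Type} [m0 : MeasurableSpace Ω] (μ : Measure Ω)
    [IsProbabilityMeasure μ] (A : Set Ω) (hA : MeasurableSet A)
    (n : ℕ) (hn : 1 ≤ n) (G : Fin n → MeasurableSpace Ω) (hG : ∀ i, G i ≤ m0) :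
    (1 / 2 : ℝ) * ∑ p ∈ Finset.univ.offDiag,
        ∫ ω, |(μ[A.indicator (fun _ => (1 : ℝ)) | G p.1]) ω -
              (μ[A.indicator (fun _ => (1 : ℝ)) | G p.2]) ω| ^ 2 ∂μ ≤
      (n : ℝ) ^ 2 / 4 * ((μ A).toReal * (1 - (μ A).toReal)) :=
  sum_sq_diff_condexp_le_general (m0 := m0) μ A hA n G hG
end

section
/- For every n ≥ 1 and every matrix A = (a_{ij}) ∈ {0,1}^{n×n}, writing R_i = Σ_{j=1}^n a_{ij} for the row sums and C_j = Σ_{i=1}^n a_{ij} for the column sums, one has Σ_{i,j=1}^n |R_i - C_j|² ≤ n⁴/4. Equivalently, for every bipartite graph with vertex parts {x_1,...,x_n} and {y_1,...,y_n}, Σ_{i,j=1}^n |deg(x_i) - deg(y_j)|² ≤ n⁴/4. -/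
/-- For every `n ≥ 1` and every 0-1 matrix `A`, with row sums `R_i` and column sums `C_j`,
`Σ_{i,j} |R_i - C_j|² ≤ n⁴/4`.  (Equivalently, for every bipartite graph with parts of size `n`
encoded by its biadjacency matrix `A`, `Σ_{i,j} |deg(x_i) - deg(y_j)|² ≤ n⁴/4`.) -/
theorem sum_sq_row_col_diff_le (n : ℕ) (hn : 1 ≤ n) (A : Fin n → Fin n → ℝ)
    (hA : ∀ i j, A i j = 0 ∨ A i j = 1) :
    ∑ i : Fin n, ∑ j : Fin n, |(∑ l : Fin n, A i l) - (∑ l : Fin n, A l j)| ^ 2 ≤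
      (n : ℝ) ^ 4 / 4 := by
  set R : Fin n → ℝ := fun i => ∑ l : Fin n, A i l with hRdef
  set C : Fin n → ℝ := fun j => ∑ l : Fin n, A l j with hCdef
  set e : ℝ := ∑ i : Fin n, ∑ j : Fin n, A i j with hedef
  have hA0 : ∀ i j, 0 ≤ A i j := by
    intro i j; rcases hA i j with h | h <;> simp [h]
  have hA1 : ∀ i j, A i j ≤ 1 := by
    intro i j; rcases hA i j with h | h <;> simp [h]
  have hR0 : ∀ i, 0 ≤ R i := fun i => Finset.sum_nonneg fun l _ => hA0 i l
  have hC0 : ∀ j, 0 ≤ C j := fun j => Finset.sum_nonneg fun l _ => hA0 l j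
  have hRn : ∀ i, R i ≤ n := by
    intro i
    calc R i ≤ ∑ _l : Fin n, (1 : ℝ) := Finset.sum_le_sum fun l _ => hA1 i l
    _ = n := by simp
  have hCn : ∀ j, C j ≤ n := by
    intro j
    calc C j ≤ ∑ _l : Fin n, (1 : ℝ) := Finset.sum_le_sum fun l _ => hA1 l j
    _ = n := by simp
  have hsumR : ∑ i : Fin n, R i = e := rfl
  have hsumC : ∑ j : Fin n, C j = e := by
    rw [hedef]; exact Finset.sum_comm
  have habs : ∀ i j, |R i - C j| ^ 2 = (R i - C j) ^ 2 := fun i j => sq_abs _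
  -- the main identity
  have key : ∑ i : Fin n, ∑ j : Fin n, (R i - C j) ^ 2
      = (n : ℝ) * (∑ i : Fin n, (R i) ^ 2) + (n : ℝ) * (∑ j : Fin n, (C j) ^ 2)
        - 2 * e * e := by
    have inner : ∀ i : Fin n, ∑ j : Fin n, (R i - C j) ^ 2
        = (n : ℝ) * (R i) ^ 2 - 2 * R i * e + ∑ j : Fin n, (C j) ^ 2 := by
      intro i
      have expand : ∑ j : Fin n, (R i - C j) ^ 2
          = ∑ j : Fin n, ((R i) ^ 2 - 2 * R i * C j + (C j) ^ 2) :=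
        Finset.sum_congr rfl fun j _ => by ring
      rw [expand, Finset.sum_add_distrib, Finset.sum_sub_distrib, Finset.sum_const,
        ← Finset.mul_sum, hsumC, Finset.card_univ, Fintype.card_fin]
      simp [nsmul_eq_mul]
    rw [Finset.sum_congr rfl fun i _ => inner i]
    have h2 : ∑ i : Fin n, (2 * R i * e) = 2 * e * e := by
      rw [← Finset.sum_mul, ← Finset.mul_sum, hsumR]
    rw [Finset.sum_add_distrib, Finset.sum_sub_distrib, ← Finset.mul_sum, h2,
      Finset.sum_const, Finset.card_univ, Fintype.card_fin, nsmul_eq_mul]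
    ring
  -- T + U as a double sum
  have hT : ∑ i : Fin n, (R i) ^ 2 = ∑ i : Fin n, ∑ j : Fin n, A i j * R i := by
    refine Finset.sum_congr rfl fun i _ => ?_
    rw [sq]
    calc R i * R i = (∑ j : Fin n, A i j) * R i := rfl
    _ = ∑ j : Fin n, A i j * R i := Finset.sum_mul _ _ _
  have hU : ∑ j : Fin n, (C j) ^ 2 = ∑ i : Fin n, ∑ j : Fin n, A i j * C j := by
    rw [Finset.sum_comm]
    refine Finset.sum_congr rfl fun j _ => ?_
    rw [sq]
    calc C j * C j = (∑ i : Fin n, A i j) * C j := rfl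
    _ = ∑ i : Fin n, A i j * C j := Finset.sum_mul _ _ _
  -- pointwise bound: n * A i j * (R i + C j) ≤ n^2 * A i j + R i * C j
  have point : ∀ i j, (n : ℝ) * (A i j * R i + A i j * C j)
      ≤ (n : ℝ) ^ 2 * A i j + R i * C j := by
    intro i j
    have h1 : 0 ≤ A i j * (((n : ℝ) - R i) * ((n : ℝ) - C j)) :=
      mul_nonneg (hA0 i j)
        (mul_nonneg (by linarith [hRn i]) (by linarith [hCn j]))
    have h2 : 0 ≤ (1 - A i j) * (R i * C j) :=
      mul_nonneg (by linarith [hA1 i j]) (mul_nonneg (hR0 i) (hC0 j))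
    nlinarith [h1, h2]
  -- double sum of R i * C j is e * e
  have hRC : ∑ i : Fin n, ∑ j : Fin n, R i * C j = e * e := by
    rw [show (∑ i : Fin n, ∑ j : Fin n, R i * C j)
        = (∑ i : Fin n, R i) * (∑ j : Fin n, C j) from
      (Finset.sum_mul_sum _ _ _ _).symm, hsumR, hsumC]
  have hsplit : ∑ i : Fin n, ∑ j : Fin n, ((n : ℝ) ^ 2 * A i j + R i * C j)
      = (n : ℝ) ^ 2 * e + e * e := by
    have h1 : ∑ i : Fin n, ∑ j : Fin n, ((n : ℝ) ^ 2 * A i j + R i * C j)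
        = (∑ i : Fin n, ∑ j : Fin n, (n : ℝ) ^ 2 * A i j)
          + ∑ i : Fin n, ∑ j : Fin n, R i * C j := by
      rw [← Finset.sum_add_distrib]
      exact Finset.sum_congr rfl fun i _ => Finset.sum_add_distrib
    have h2 : ∑ i : Fin n, ∑ j : Fin n, (n : ℝ) ^ 2 * A i j = (n : ℝ) ^ 2 * e := by
      rw [hedef, Finset.mul_sum]
      exact Finset.sum_congr rfl fun i _ => (Finset.mul_sum _ _ _).symm
    rw [h1, h2, hRC]
  -- n * (T + U) ≤ n^2 * e + e * e
  have bound : (n : ℝ) * ((∑ i : Fin n, (R i) ^ 2) + (∑ j : Fin n, (C j) ^ 2))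
      ≤ (n : ℝ) ^ 2 * e + e * e := by
    rw [hT, hU]
    calc (n : ℝ) * ((∑ i : Fin n, ∑ j : Fin n, A i j * R i)
          + (∑ i : Fin n, ∑ j : Fin n, A i j * C j))
        = ∑ i : Fin n, ∑ j : Fin n, (n : ℝ) * (A i j * R i + A i j * C j) := by
          rw [← Finset.sum_add_distrib, Finset.mul_sum]
          refine Finset.sum_congr rfl fun i _ => ?_
          rw [← Finset.sum_add_distrib, Finset.mul_sum]
    _ ≤ ∑ i : Fin n, ∑ j : Fin n, ((n : ℝ) ^ 2 * A i j + R i * C j) :=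
          Finset.sum_le_sum fun i _ => Finset.sum_le_sum fun j _ => point i j
    _ = (n : ℝ) ^ 2 * e + e * e := hsplit
  have hn1 : (1 : ℝ) ≤ (n : ℝ) := by exact_mod_cast hn
  calc ∑ i : Fin n, ∑ j : Fin n, |R i - C j| ^ 2
      = ∑ i : Fin n, ∑ j : Fin n, (R i - C j) ^ 2 :=
        Finset.sum_congr rfl fun i _ => Finset.sum_congr rfl fun j _ => habs i j
  _ = (n : ℝ) * (∑ i : Fin n, (R i) ^ 2) + (n : ℝ) * (∑ j : Fin n, (C j) ^ 2)
        - 2 * e * e := key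
  _ ≤ (n : ℝ) ^ 2 * e + e * e - 2 * e * e := by nlinarith [bound]
  _ = e * ((n : ℝ) ^ 2 - e) := by ring
  _ ≤ (n : ℝ) ^ 4 / 4 := by nlinarith [sq_nonneg ((n : ℝ) ^ 2 - 2 * e)]
end

section
/- Fix integers n ≥ 1 and k ≥ 2. Define Ξ_n^k : [0,1]^{n×n} → ℝ by Ξ_n^k(A) = Σ_{i,j=1}^n |R_i(A) - C_j(A)|^k, where R_i(A) = Σ_{j=1}^n a_{ij} and C_j(A) = Σ_{i=1}^n a_{ij}. Then the supremum of Ξ_n^k over all matrices A ∈ [0,1]^{n×n} equals its supremum over the 0-1 matrices A ∈ {0,1}^{n×n} (the maximum is attained at a 0-1 matrix). -/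
/-!
`Ξ` is convex on all of `ℝ^{n×n}`, being a sum of `|·|^k` composed with the linear forms
`R_i - C_j`. The cube `[0,1]^{n×n}` is the convex hull of the finitely many 0-1 matrices, and a
convex function on a convex hull is bounded by its values at the generating points.
-/

open Set

lemma convexOn_abs_pow (k : ℕ) : ConvexOn ℝ univ fun x : ℝ => |x| ^ k :=
  (convexOn_univ_norm (E := ℝ)).pow (fun _ _ => norm_nonneg _) k

lemma ConvexOn.finsetSum {𝕜 E β ι : Type*} [Semiring 𝕜] [PartialOrder 𝕜] [AddCommMonoid E]
    [SMul 𝕜 E] [AddCommMonoid β] [PartialOrder β] [IsOrderedAddMonoid β] [Module 𝕜 β]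
    {s : Set E} (hs : Convex 𝕜 s) (t : Finset ι) {f : ι → E → β}
    (hf : ∀ i ∈ t, ConvexOn 𝕜 s (f i)) : ConvexOn 𝕜 s fun x => ∑ i ∈ t, f i x := by
  classical
  induction t using Finset.induction with
  | empty => simpa using convexOn_const (0 : β) hs
  | insert i t hi ih =>
    simp only [Finset.sum_insert hi]
    exact (hf i (Finset.mem_insert_self i t)).add
      (ih fun j hj => hf j (Finset.mem_insert_of_mem hj))

lemma ConvexOn.sSup_image_convexHull {E : Type*} [AddCommGroup E] [Module ℝ E] {t : Set E}
    {f : E → ℝ} (hf : ConvexOn ℝ (convexHull ℝ t) f) (ht : t.Finite) :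
    sSup (f '' convexHull ℝ t) = sSup (f '' t) := by
  rcases t.eq_empty_or_nonempty with rfl | hne
  · simp
  have hbdd : BddAbove (f '' t) := (ht.image f).bddAbove
  have hle : ∀ y ∈ f '' convexHull ℝ t, y ≤ sSup (f '' t) := by
    rintro _ ⟨x, hx, rfl⟩
    obtain ⟨z, hz, hxz⟩ := hf.exists_ge_of_mem_convexHull (subset_convexHull ℝ t) hx
    exact hxz.trans (le_csSup hbdd (mem_image_of_mem f hz))
  exact le_antisymm (csSup_le ((hne.mono (subset_convexHull ℝ t)).image f) hle)
    (csSup_le_csSup ⟨_, hle⟩ (hne.image f) (image_mono (subset_convexHull ℝ t)))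

section ZeroOneMatrices

variable {ι κ : Type*} [Finite ι] [Finite κ]

lemma convexHull_setOf_forall_eq_zero_or_eq_one :
    convexHull ℝ {A : ι → κ → ℝ | ∀ i j, A i j = 0 ∨ A i j = 1} =
      {A | ∀ i j, A i j ∈ Icc (0 : ℝ) 1} := by
  have hpi : {A : ι → κ → ℝ | ∀ i j, A i j = 0 ∨ A i j = 1} =
      univ.pi fun _ => univ.pi fun _ => ({0, 1} : Set ℝ) := by
    ext A; simp
  rw [hpi]
  simp only [convexHull_pi, convexHull_pair, segment_eq_Icc zero_le_one]
  ext A; simp only [mem_pi, mem_univ, true_implies, mem_ofPred_eq]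

lemma finite_setOf_forall_eq_zero_or_eq_one :
    {A : ι → κ → ℝ | ∀ i j, A i j = 0 ∨ A i j = 1}.Finite :=
  Finite.pi' fun _ => Finite.pi' fun _ => toFinite ({0, 1} : Set ℝ)

end ZeroOneMatrices

section SquareMatrices

variable {ι : Type*} [Fintype ι]

def rowSumSubColSum (i j : ι) : (ι → ι → ℝ) →ₗ[ℝ] ℝ where
  toFun A := ∑ l, A i l - ∑ l, A l j
  map_add' A B := by simp only [Pi.add_apply, Finset.sum_add_distrib]; ring
  map_smul' c A := by
    simp only [Pi.smul_apply, smul_eq_mul, RingHom.id_apply, ← Finset.mul_sum]; ring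

def Xi (k : ℕ) (A : ι → ι → ℝ) : ℝ :=
  ∑ i, ∑ j, |(∑ l, A i l) - (∑ l, A l j)| ^ k

lemma convexOn_Xi (k : ℕ) : ConvexOn ℝ univ (Xi (ι := ι) k) :=
  ConvexOn.finsetSum convex_univ _ fun i _ => ConvexOn.finsetSum convex_univ _ fun j _ =>
    (convexOn_abs_pow k).comp_linearMap (rowSumSubColSum i j)

end SquareMatrices

theorem sup_Xi_unitInterval_eq_sup_zeroOne_general (n k : ℕ) :
    sSup { r : ℝ | ∃ A : Fin n → Fin n → ℝ, (∀ i j, A i j ∈ Set.Icc (0 : ℝ) 1) ∧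
        r = ∑ i : Fin n, ∑ j : Fin n, |(∑ l : Fin n, A i l) - (∑ l : Fin n, A l j)| ^ k } =
    sSup { r : ℝ | ∃ A : Fin n → Fin n → ℝ, (∀ i j, A i j = 0 ∨ A i j = 1) ∧
        r = ∑ i : Fin n, ∑ j : Fin n, |(∑ l : Fin n, A i l) - (∑ l : Fin n, A l j)| ^ k } := by
  have key := ((convexOn_Xi (ι := Fin n) k).subset (subset_univ _) (convex_convexHull ℝ _)
    ).sSup_image_convexHull finite_setOf_forall_eq_zero_or_eq_one
  rw [convexHull_setOf_forall_eq_zero_or_eq_one] at key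
  convert key using 2 <;> ext r <;>
    exact ⟨fun ⟨A, hA, hr⟩ => ⟨A, hA, hr.symm⟩, fun ⟨A, hA, hr⟩ => ⟨A, hA, hr.symm⟩⟩

/-- For `n ≥ 1` and `k ≥ 2`, the supremum of
`Ξ_n^k(A) = Σ_{i,j} |R_i(A) - C_j(A)|^k` over matrices `A ∈ [0,1]^{n×n}` equals its supremum
over 0-1 matrices `A ∈ {0,1}^{n×n}`. -/
theorem sup_Xi_unitInterval_eq_sup_zeroOne (n k : ℕ) (hn : 1 ≤ n) (hk : 2 ≤ k) :
    sSup { r : ℝ | ∃ A : Fin n → Fin n → ℝ, (∀ i j, A i j ∈ Set.Icc (0 : ℝ) 1) ∧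
        r = ∑ i : Fin n, ∑ j : Fin n, |(∑ l : Fin n, A i l) - (∑ l : Fin n, A l j)| ^ k } =
    sSup { r : ℝ | ∃ A : Fin n → Fin n → ℝ, (∀ i j, A i j = 0 ∨ A i j = 1) ∧
        r = ∑ i : Fin n, ∑ j : Fin n, |(∑ l : Fin n, A i l) - (∑ l : Fin n, A l j)| ^ k } :=
  sup_Xi_unitInterval_eq_sup_zeroOne_general n k
end

section
/- The supremum of E|X-Y|² over all coherent pairs (X,Y) with X independent of Y equals sup_{n ∈ ℤ₊} sup over bipartite graphs G ∈ B(n,n) of (1/n⁴) Σ_{i,j=1}^n |deg(x_i) - deg(y_j)|². -/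
open MeasureTheory ProbabilityTheory

/-- The set of values `E|X - Y|^k` over all independent coherent pairs `(X, Y)`. -/
def coherentIndepPowVals (k : ℕ) : Set ℝ :=
  { r : ℝ | ∃ (Ω : Type) (m0 : MeasurableSpace Ω) (μ : Measure Ω),
      IsProbabilityMeasure μ ∧ ∃ X Y : Ω → ℝ,
        IsCoherentPair μ X Y ∧ IndepFun X Y μ ∧ r = ∫ ω, |X ω - Y ω| ^ k ∂μ }

/-- The set of values `(1/n^{2+k}) Σ_{i,j} |deg(x_i) - deg(y_j)|^k` over all `n ≥ 1` and all
bipartite graphs in `B(n,n)`, encoded by their biadjacency matrices `A : Fin n → Fin n → Bool`;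
`deg(x_i)` is the `i`-th row sum and `deg(y_j)` the `j`-th column sum of `A`. -/
def bipartiteDegVals (k : ℕ) : Set ℝ :=
  { r : ℝ | ∃ n : ℕ, 0 < n ∧ ∃ A : Fin n → Fin n → Bool,
      r = (1 / (n : ℝ) ^ (2 + k)) * ∑ i : Fin n, ∑ j : Fin n,
        |(∑ l : Fin n, if A i l then (1 : ℝ) else 0) -
          (∑ l : Fin n, if A l j then (1 : ℝ) else 0)| ^ k }

/-! Both suprema equal `1 / 4`. If `f` takes values in `[0, 1]` and `X = E[f | G]`,
`Y = E[f | H]` are independent, then `E[X (X - f)] = E[Y (Y - f)] = 0`, `E[X Y] = p²` with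
`p = E f`, and the pointwise inequality `f (X + Y) ≤ f + X Y` gives
`E (X - Y)² ≤ p - p² ≤ 1 / 4`. For a bipartite graph the same computation, with the
normalised degrees as `X` and `Y` and the adjacency matrix as `f` under the uniform measure on
pairs of vertices, bounds the degree sum by `n⁴ / 4`. The value `1 / 4` is attained by a fair
coin against its mean, and by the graph on `2 + 2` vertices where `x₁` is joined to both `y`'s. -/

lemma mul_mul_add_le_mul_sq_add_mul {t x y c : ℝ} (ht₀ : 0 ≤ t) (ht₁ : t ≤ 1)
    (hx₀ : 0 ≤ x) (hxc : x ≤ c) (hy₀ : 0 ≤ y) (hyc : y ≤ c) :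
    t * (c * (x + y)) ≤ t * c ^ 2 + x * y := by
  nlinarith [mul_nonneg ht₀ (mul_nonneg (sub_nonneg.2 hxc) (sub_nonneg.2 hyc)),
    mul_nonneg (sub_nonneg.2 ht₁) (mul_nonneg hx₀ hy₀)]

namespace MeasureTheory

variable {Ω : Type*} {m m₁ m₂ m₀ : MeasurableSpace Ω} {μ : Measure Ω} {f g : Ω → ℝ}

lemma integral_mul_condExp_sub_eq_zero (hm : m ≤ m₀) [SigmaFinite (μ.trim hm)]
    (hg : StronglyMeasurable[m] g) (hgf : Integrable (g * f) μ) (hf : Integrable f μ) :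
    ∫ ω, g ω * (μ[f | m] ω - f ω) ∂μ = 0 := by
  have hpull : μ[g * f | m] =ᵐ[μ] g * μ[f | m] :=
    condExp_mul_of_stronglyMeasurable_left hg hgf hf
  have hint : Integrable (g * μ[f | m]) μ := integrable_condExp.congr hpull
  calc ∫ ω, g ω * (μ[f | m] ω - f ω) ∂μ
      = ∫ ω, (g * μ[f | m]) ω ∂μ - ∫ ω, (g * f) ω ∂μ := by
        simp only [mul_sub]
        exact integral_sub hint hgf
    _ = 0 := by rw [← integral_congr_ae hpull, integral_condExp hm, sub_self]

lemma condExp_mem_Icc_zero_one (hf : ∀ᵐ ω ∂μ, f ω ∈ Set.Icc 0 1) :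
    ∀ᵐ ω ∂μ, μ[f | m] ω ∈ Set.Icc 0 1 := by
  filter_upwards [condExp_nonneg (m := m) (hf.mono fun _ h => h.1),
    condExp_le_nonneg_const (m := m) zero_le_one (hf.mono fun _ h => h.2)] with ω h₀ h₁
  exact ⟨h₀, h₁⟩

theorem integral_sq_sub_condExp_le_of_indepFun [IsProbabilityMeasure μ]
    (hm₁ : m₁ ≤ m₀) (hm₂ : m₂ ≤ m₀)
    (hfm : AEStronglyMeasurable f μ) (hf : ∀ᵐ ω ∂μ, f ω ∈ Set.Icc 0 1)
    (hind : IndepFun (μ[f | m₁]) (μ[f | m₂]) μ) :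
    ∫ ω, (μ[f | m₁] ω - μ[f | m₂] ω) ^ 2 ∂μ ≤ 1 / 4 := by
  set X := μ[f | m₁]
  set Y := μ[f | m₂]
  set p := ∫ ω, f ω ∂μ
  have norm_le_one {x : ℝ} (hx : x ∈ Set.Icc 0 1) : ‖x‖ ≤ 1 :=
    (Real.norm_of_nonneg hx.1).trans_le hx.2
  have hX := condExp_mem_Icc_zero_one (m := m₁) hf
  have hY := condExp_mem_Icc_zero_one (m := m₂) hf
  have hXn : ∀ᵐ ω ∂μ, ‖X ω‖ ≤ 1 := hX.mono fun _ => norm_le_one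
  have hYn : ∀ᵐ ω ∂μ, ‖Y ω‖ ≤ 1 := hY.mono fun _ => norm_le_one
  have hfi : Integrable f μ := .of_bound hfm 1 (hf.mono fun _ => norm_le_one)
  have hXi : Integrable X μ := integrable_condExp
  have hYi : Integrable Y μ := integrable_condExp
  have hX_orth : ∫ ω, X ω * (X ω - f ω) ∂μ = 0 :=
    integral_mul_condExp_sub_eq_zero hm₁ stronglyMeasurable_condExp
      (hfi.bdd_mul hXi.1 hXn) hfi
  have hY_orth : ∫ ω, Y ω * (Y ω - f ω) ∂μ = 0 :=
    integral_mul_condExp_sub_eq_zero hm₂ stronglyMeasurable_condExp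
      (hfi.bdd_mul hYi.1 hYn) hfi
  have hXY : ∫ ω, X ω * Y ω ∂μ = p * p := by
    rw [hind.integral_fun_mul_eq_mul_integral hXi.1 hYi.1, integral_condExp hm₁,
      integral_condExp hm₂]
  -- expanding the square, this is `f (X + Y) ≤ f + X Y`
  have hpoint : ∀ᵐ ω ∂μ, (X ω - Y ω) ^ 2 ≤
      X ω * (X ω - f ω) + Y ω * (Y ω - f ω) + (f ω - X ω * Y ω) := by
    filter_upwards [hf, hX, hY] with ω hfω hXω hYω
    linear_combination mul_mul_add_le_mul_sq_add_mul hfω.1 hfω.2 hXω.1 hXω.2 hYω.1 hYω.2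
  have hXXf : Integrable (fun ω => X ω * (X ω - f ω)) μ := (hXi.sub hfi).bdd_mul hXi.1 hXn
  have hYYf : Integrable (fun ω => Y ω * (Y ω - f ω)) μ := (hYi.sub hfi).bdd_mul hYi.1 hYn
  have hXYi : Integrable (fun ω => X ω * Y ω) μ := hYi.bdd_mul hXi.1 hXn
  calc ∫ ω, (X ω - Y ω) ^ 2 ∂μ
      ≤ ∫ ω, (X ω * (X ω - f ω) + Y ω * (Y ω - f ω) + (f ω - X ω * Y ω)) ∂μ :=
        integral_mono_of_nonneg (.of_forall fun _ => sq_nonneg _)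
          ((hXXf.add hYYf).add (hfi.sub hXYi)) hpoint
    _ = p - p * p := by
        rw [integral_add (f := fun ω => X ω * (X ω - f ω) + Y ω * (Y ω - f ω))
            (g := fun ω => f ω - X ω * Y ω) (hXXf.add hYYf) (hfi.sub hXYi),
          integral_add hXXf hYYf, integral_sub hfi hXYi, hX_orth, hY_orth, hXY, zero_add, zero_add]
    _ ≤ 1 / 4 := by nlinarith [sq_nonneg (p - 1 / 2)]

end MeasureTheory

lemma le_of_mem_coherentIndepPowVals_two {r : ℝ} (hr : r ∈ coherentIndepPowVals 2) :
    r ≤ 1 / 4 := by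
  obtain ⟨Ω, m₀, μ, hμ, X, Y, ⟨A, G, H, hA, hG, hH, hX, hY⟩, hind, rfl⟩ := hr
  set f := A.indicator fun _ => (1 : ℝ)
  have hf : ∀ᵐ ω ∂μ, f ω ∈ Set.Icc 0 1 := .of_forall fun ω => by
    by_cases h : ω ∈ A <;> simp [f, h]
  calc ∫ ω, |X ω - Y ω| ^ 2 ∂μ = ∫ ω, (μ[f | G] ω - μ[f | H] ω) ^ 2 ∂μ := by
        refine integral_congr_ae ?_
        filter_upwards [hX, hY] with ω hXω hYω
        rw [hXω, hYω, sq_abs]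
    -- `hA` is measurability for `H`, the σ-algebra bound last in `IsCoherentPair`
    _ ≤ 1 / 4 := integral_sq_sub_condExp_le_of_indepFun hG hH
          (stronglyMeasurable_const.indicator (hH _ hA)).aestronglyMeasurable hf
          (hind.congr hX hY)

lemma isGreatest_coherentIndepPowVals_two : IsGreatest (coherentIndepPowVals 2) (1 / 4) := by
  refine ⟨?_, fun _ => le_of_mem_coherentIndepPowVals_two⟩
  set μ := (PMF.uniformOfFintype Bool).toMeasure
  set f : Bool → ℝ := ({true} : Set Bool).indicator fun _ => 1
  have hμ (g : Bool → ℝ) : ∫ b, g b ∂μ = (g true + g false) / 2 := by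
    simp [μ, PMF.integral_eq_sum]
    ring
  refine ⟨Bool, _, μ, inferInstance, fun _ => 1 / 2, f, ?_, indepFun_const_left _ _, ?_⟩
  · refine ⟨{true}, ⊥, ⊤, trivial, bot_le, le_rfl, ?_, ?_⟩
    · rw [condExp_bot, hμ]
      simp
    · rw [condExp_of_stronglyMeasurable le_rfl .of_discrete Integrable.of_finite]
  · rw [hμ]
    norm_num [f]

lemma sum_sum_sq_sub_rowSum_colSum_le {ι : Type*} [Fintype ι] {a : ι → ι → ℝ}
    (ha : ∀ i j, a i j ∈ Set.Icc 0 1) :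
    ∑ i, ∑ j, (∑ l, a i l - ∑ l, a l j) ^ 2 ≤ (Fintype.card ι : ℝ) ^ 4 / 4 := by
  set N : ℝ := (Fintype.card ι : ℝ)
  set d : ι → ℝ := fun i => ∑ l, a i l
  set e : ι → ℝ := fun j => ∑ l, a l j
  have hd : ∀ i, d i ∈ Set.Icc 0 N := fun i => ⟨Finset.sum_nonneg fun l _ => (ha i l).1,
    (Finset.sum_le_sum fun l _ => (ha i l).2).trans_eq (by simp [N])⟩
  have he : ∀ j, e j ∈ Set.Icc 0 N := fun j => ⟨Finset.sum_nonneg fun l _ => (ha l j).1,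
    (Finset.sum_le_sum fun l _ => (ha l j).2).trans_eq (by simp [N])⟩
  have hS : ∑ j, e j = ∑ i, d i := Finset.sum_comm
  have hrow : ∑ i, ∑ j, d i * (d i - N * a i j) = 0 := by
    simp [d, N, ← Finset.mul_sum, Finset.sum_sub_distrib]
  have hcol : ∑ i, ∑ j, e j * (e j - N * a i j) = 0 := by
    rw [Finset.sum_comm]
    simp [e, N, ← Finset.mul_sum, Finset.sum_sub_distrib]
  have hrest :
      ∑ i, ∑ j, (N ^ 2 * a i j - d i * e j) = N ^ 2 * ∑ i, d i - (∑ i, d i) ^ 2 := by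
    simp only [Finset.sum_sub_distrib, ← Finset.mul_sum, ← Finset.sum_mul, hS]
    ring
  calc ∑ i, ∑ j, (d i - e j) ^ 2
      ≤ ∑ i, ∑ j, (d i * (d i - N * a i j) + e j * (e j - N * a i j)
          + (N ^ 2 * a i j - d i * e j)) := by
        gcongr with i _ j _
        linear_combination mul_mul_add_le_mul_sq_add_mul (ha i j).1 (ha i j).2
          (hd i).1 (hd i).2 (he j).1 (he j).2
    _ = N ^ 2 * ∑ i, d i - (∑ i, d i) ^ 2 := by
        simp only [Finset.sum_add_distrib, hrow, hcol, hrest, zero_add]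
    _ ≤ N ^ 4 / 4 := by nlinarith [sq_nonneg (N ^ 2 - 2 * ∑ i, d i)]

lemma le_of_mem_bipartiteDegVals_two {r : ℝ} (hr : r ∈ bipartiteDegVals 2) : r ≤ 1 / 4 := by
  obtain ⟨n, hn, A, rfl⟩ := hr
  have hbound := sum_sum_sq_sub_rowSum_colSum_le
    (a := fun i j : Fin n => if A i j then 1 else 0) fun i j => by split_ifs <;> simp
  simp only [sq_abs, Fintype.card_fin] at hbound ⊢
  rw [one_div_mul_eq_div, div_le_iff₀ (by positivity)]
  linarith

lemma isGreatest_bipartiteDegVals_two : IsGreatest (bipartiteDegVals 2) (1 / 4) :=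
  ⟨⟨2, two_pos, fun i _ => i = 0, by norm_num [Fin.sum_univ_two]⟩,
    fun _ => le_of_mem_bipartiteDegVals_two⟩

/-- The supremum of `E|X - Y|²` over independent coherent pairs equals
`sup_n sup_{G ∈ B(n,n)} (1/n⁴) Σ_{i,j} |deg(x_i) - deg(y_j)|²`. -/
theorem sup_coherent_indep_sq_eq_sup_bipartite :
    sSup (coherentIndepPowVals 2) = sSup (bipartiteDegVals 2) := by
  rw [isGreatest_coherentIndepPowVals_two.csSup_eq, isGreatest_bipartiteDegVals_two.csSup_eq]
end

section
/- For every integer k ≥ 3, sup_{n ∈ ℤ₊} sup over bipartite graphs G ∈ B(n,n) of (1/n^{2+k}) Σ_{i,j=1}^n |deg(x_i) - deg(y_j)|^k equals sup_{n ∈ ℤ₊} sup over sequences b = (b_1,...,b_n) ∈ {0,1,...,n}^n of (1/n^{2+k}) Σ_{i,j=1}^n |b*_i - b_j|^k, where b* is the conjugate partition of b. -/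
/-- The conjugate partition of a sequence `b = (b_1, …, b_n)` with `0 ≤ b_i ≤ n`:
`b*_i = |{j : b_j ≥ i}|`, where the index `i : Fin n` represents the integer `i + 1`. -/
def conjugatePartition {n : ℕ} (b : Fin n → ℕ) (i : Fin n) : ℕ :=
  (Finset.univ.filter fun j => (i : ℕ) + 1 ≤ b j).card

/-- The set of values `(1/n^{2+k}) Σ_{i,j} |b*_i - b_j|^k` over all `n ≥ 1` and all sequences
`b ∈ {0, 1, …, n}^n`, where `b*` is the conjugate partition of `b`. -/
def conjPartitionVals (k : ℕ) : Set ℝ :=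
  { r : ℝ | ∃ n : ℕ, 0 < n ∧ ∃ b : Fin n → ℕ, (∀ j, b j ≤ n) ∧
      r = (1 / (n : ℝ) ^ (2 + k)) * ∑ i : Fin n, ∑ j : Fin n,
        |((conjugatePartition b i : ℝ)) - (b j : ℝ)| ^ k }

/-!
The Ferrers diagram of `b` is a bipartite graph with row degrees `b` and column degrees `b*`, so
every conjugate-partition value is a graph value. Conversely, if a graph has row degrees `r` and
column degrees `c`, the easy half of Gale–Ryser says that `c` is majorized by `r*`; Karamata's
inequality for the convex functions `y ↦ |r_i - y|^k` then bounds the graph value by the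
conjugate-partition value of `r`. Each set of values thus dominates the other, so the suprema agree.

Majorization is used in the hinge form `∑ j, (c_j - t)₊ ≤ ∑ j, (r*_j - t)₊` for all `t`, which needs
no sorting; Karamata follows because a convex sequence is an affine function plus a nonnegative
combination of hinges.
-/

open Finset

section ConvexSequence

/-- Discrete Taylor formula: on `{0, …, N}` a function is affine plus a combination of the hinges
`x ↦ x - (s + 1)` (truncated subtraction), weighted by its second differences. -/
lemma eq_affine_add_sum_hinge (f : ℕ → ℝ) {x N : ℕ} (hx : x ≤ N) :
    f x = f 0 + x * (f 1 - f 0) +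
      ∑ s ∈ range N, (f (s + 2) - 2 * f (s + 1) + f s) * ((x - (s + 1) : ℕ) : ℝ) := by
  have hrange : ∀ x : ℕ, f x = f 0 + x * (f 1 - f 0) +
      ∑ s ∈ range x, (f (s + 2) - 2 * f (s + 1) + f s) * ((x - (s + 1) : ℕ) : ℝ) := by
    intro x
    induction x with
    | zero => simp
    | succ x ih =>
      have hshift : ∀ s ∈ range x, ((x + 1 - (s + 1) : ℕ) : ℝ) = ((x - (s + 1) : ℕ) : ℝ) + 1 := by
        intro s hs
        rw [mem_range] at hs
        rw [← Nat.cast_add_one, Nat.add_sub_add_right]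
        congr 1
        omega
      have htel : ∑ s ∈ range x, (f (s + 2) - 2 * f (s + 1) + f s) =
          (f (x + 1) - f x) - (f 1 - f 0) := by
        rw [← sum_range_sub (fun s => f (s + 1) - f s)]
        exact sum_congr rfl fun s _ => by ring_nf
      rw [sum_range_succ, Nat.sub_self, sum_congr rfl fun s hs => by rw [hshift s hs]]
      simp only [mul_add, mul_one, sum_add_distrib, htel]
      push_cast
      linarith
  rw [hrange x]
  congr 1
  refine sum_subset (range_subset_range.2 hx) fun s _ hs => ?_
  rw [mem_range, not_lt] at hs
  simp [Nat.sub_eq_zero_of_le (Nat.le_succ_of_le hs)]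

/-- Karamata's inequality for convex sequences, with the majorization `c ≺ d` in hinge form. -/
theorem sum_le_sum_of_sum_tsub_le {ι : Type*} [Fintype ι] {f : ℕ → ℝ}
    (hf : ∀ s, f (s + 1) - f s ≤ f (s + 2) - f (s + 1)) {c d : ι → ℕ}
    (hsum : ∑ i, c i = ∑ i, d i) (hhinge : ∀ t, ∑ i, (c i - t) ≤ ∑ i, (d i - t)) :
    ∑ i, f (c i) ≤ ∑ i, f (d i) := by
  have hexpand : ∀ (N : ℕ) (e : ι → ℕ), (∀ i, e i ≤ N) → ∑ i, f (e i) =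
      Fintype.card ι * f 0 + ((∑ i, e i : ℕ) : ℝ) * (f 1 - f 0) +
        ∑ s ∈ range N, (f (s + 2) - 2 * f (s + 1) + f s) * ((∑ i, (e i - (s + 1)) : ℕ) : ℝ) := by
    intro N e he
    rw [sum_congr rfl fun i _ => eq_affine_add_sum_hinge f (he i)]
    simp only [sum_add_distrib, Nat.cast_sum, mul_sum, sum_mul]
    rw [sum_comm (s := univ)]
    simp [card_univ]
  have hc : ∀ i, c i ≤ ∑ j, c j := fun i => single_le_sum (fun _ _ => Nat.zero_le _) (mem_univ i)
  have hd : ∀ i, d i ≤ ∑ j, c j :=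
    hsum ▸ fun i => single_le_sum (fun _ _ => Nat.zero_le _) (mem_univ i)
  rw [hexpand _ c hc, hexpand _ d hd, hsum]
  gcongr _ + ∑ s ∈ _, ?_ * ?_ with s
  · linarith [hf s]
  · exact_mod_cast hhinge (s + 1)

lemma ConvexOn.natCast_sub_le {g : ℝ → ℝ} (hg : ConvexOn ℝ Set.univ g) (s : ℕ) :
    g ↑(s + 1) - g ↑s ≤ g ↑(s + 2) - g ↑(s + 1) := by
  have hslope := hg.slope_mono_adjacent (x := s) (y := s + 1) (z := s + 2) trivial trivial
    (by linarith) (by linarith)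
  push_cast
  ring_nf at hslope ⊢
  simpa using hslope

lemma convexOn_abs_sub_pow (a : ℝ) (k : ℕ) : ConvexOn ℝ Set.univ fun y : ℝ => |y - a| ^ k := by
  have hdist : (fun y : ℝ => dist y a) ^ k = fun y : ℝ => |y - a| ^ k := by
    ext y
    simp [Real.dist_eq]
  exact hdist ▸ (convexOn_univ_dist a).pow (fun _ _ => dist_nonneg) k

end ConvexSequence

section Biadjacency

variable {α β : Type*}

def rowDeg [Fintype β] (A : α → β → Bool) (i : α) : ℕ := #{j | A i j}

def colDeg [Fintype α] (A : α → β → Bool) (j : β) : ℕ := #{i | A i j}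

lemma sum_ite_eq_rowDeg [Fintype β] (A : α → β → Bool) (i : α) :
    (∑ j, if A i j then (1 : ℝ) else 0) = rowDeg A i := by
  rw [sum_boole]; rfl

lemma sum_ite_eq_colDeg [Fintype α] (A : α → β → Bool) (j : β) :
    (∑ i, if A i j then (1 : ℝ) else 0) = colDeg A j := by
  rw [sum_boole]; rfl

lemma rowDeg_le_card [Fintype β] (A : α → β → Bool) (i : α) : rowDeg A i ≤ Fintype.card β :=
  card_filter_le _ _

lemma sum_colDeg_eq_sum_rowDeg [Fintype α] [Fintype β] (A : α → β → Bool) :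
    ∑ j, colDeg A j = ∑ i, rowDeg A i := by
  simp only [rowDeg, colDeg, card_filter]
  exact sum_comm

/-- The easy half of the Gale–Ryser theorem. -/
lemma sum_colDeg_le [Fintype α] [Fintype β] (A : α → β → Bool) (S : Finset β) :
    ∑ j ∈ S, colDeg A j ≤ ∑ i, min (rowDeg A i) #S := by
  simp only [colDeg, card_filter]
  rw [sum_comm]
  refine sum_le_sum fun i _ => ?_
  rw [← card_filter]
  exact le_min (card_le_card (filter_subset_filter _ (subset_univ S))) (card_filter_le _ _)

lemma sum_range_card_filter_lt [Fintype α] (r : α → ℕ) (m : ℕ) :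
    ∑ s ∈ range m, #{i | s < r i} = ∑ i, min (r i) m := by
  simp only [card_filter]
  rw [sum_comm]
  refine sum_congr rfl fun i _ => ?_
  rw [← card_filter, ← card_range (min (r i) m)]
  congr 1
  ext s
  simp only [mem_filter, mem_range]
  omega

/-- The column degrees are majorized by the conjugate of the row degrees: the hinge sum at `t` is
carried by the set of columns of degree `> t`, to which `sum_colDeg_le` applies. -/
lemma sum_colDeg_tsub_le [Fintype α] [Fintype β] (A : α → β → Bool) (t : ℕ) :
    ∑ j, (colDeg A j - t) ≤ ∑ s ∈ range (Fintype.card β), (#{i | s < rowDeg A i} - t) := by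
  set S : Finset β := {j | t < colDeg A j}
  have hS : ∑ j ∈ S, (colDeg A j - t) + #S * t ≤
      ∑ s ∈ range #S, (#{i | s < rowDeg A i} - t) + #S * t :=
    calc ∑ j ∈ S, (colDeg A j - t) + #S * t = ∑ j ∈ S, (colDeg A j - t + t) := by
          rw [sum_add_distrib, sum_const, smul_eq_mul]
      _ = ∑ j ∈ S, colDeg A j :=
          sum_congr rfl fun j hj => Nat.sub_add_cancel (mem_filter.1 hj).2.le
      _ ≤ ∑ i, min (rowDeg A i) #S := sum_colDeg_le A S
      _ = ∑ s ∈ range #S, #{i | s < rowDeg A i} := (sum_range_card_filter_lt _ _).symm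
      _ ≤ ∑ s ∈ range #S, (#{i | s < rowDeg A i} - t + t) :=
          sum_le_sum fun s _ => le_tsub_add
      _ = ∑ s ∈ range #S, (#{i | s < rowDeg A i} - t) + #S * t := by
          rw [sum_add_distrib, sum_const, card_range, smul_eq_mul]
  calc ∑ j, (colDeg A j - t) = ∑ j ∈ S, (colDeg A j - t) :=
        (sum_filter_of_ne fun j _ h => Nat.lt_of_sub_ne_zero h).symm
    _ ≤ ∑ s ∈ range #S, (#{i | s < rowDeg A i} - t) := Nat.le_of_add_le_add_right hS
    _ ≤ ∑ s ∈ range (Fintype.card β), (#{i | s < rowDeg A i} - t) :=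
        sum_le_sum_of_subset (range_subset_range.2 (card_le_univ S))

end Biadjacency

section Conjugate

variable {n : ℕ}

lemma sum_conjugatePartition {M : Type*} [AddCommMonoid M] (F : ℕ → M) (b : Fin n → ℕ) :
    ∑ s, F (conjugatePartition b s) = ∑ s ∈ range n, F #{j | s < b j} :=
  Fin.sum_univ_eq_sum_range (fun s => F #{j | s < b j}) n

lemma sum_sum_abs_sub_pow_comm {ι κ : Type*} [Fintype ι] [Fintype κ] (a : ι → ℝ) (b : κ → ℝ)
    (k : ℕ) : ∑ i, ∑ j, |a i - b j| ^ k = ∑ j, ∑ i, |b j - a i| ^ k := by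
  rw [sum_comm]
  exact sum_congr rfl fun j _ => sum_congr rfl fun i _ => by rw [abs_sub_comm]

theorem sum_sum_abs_rowDeg_sub_colDeg_pow_le (A : Fin n → Fin n → Bool) (k : ℕ) :
    ∑ i, ∑ j, |(rowDeg A i : ℝ) - colDeg A j| ^ k ≤
      ∑ i, ∑ j, |(conjugatePartition (rowDeg A) i : ℝ) - rowDeg A j| ^ k := by
  have hsum : ∑ j, colDeg A j = ∑ s, conjugatePartition (rowDeg A) s :=
    calc ∑ j, colDeg A j = ∑ i, rowDeg A i := sum_colDeg_eq_sum_rowDeg A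
      _ = ∑ s ∈ range n, #{i | s < rowDeg A i} := by
        rw [sum_range_card_filter_lt]
        exact sum_congr rfl fun i _ => (min_eq_left (by simpa using rowDeg_le_card A i)).symm
      _ = ∑ s, conjugatePartition (rowDeg A) s := (sum_conjugatePartition (fun m => m) _).symm
  have hhinge (t : ℕ) : ∑ j, (colDeg A j - t) ≤ ∑ s, (conjugatePartition (rowDeg A) s - t) := by
    rw [sum_conjugatePartition (· - t)]
    simpa using sum_colDeg_tsub_le A t
  calc ∑ i, ∑ j, |(rowDeg A i : ℝ) - colDeg A j| ^ k
      = ∑ i, ∑ j, |(colDeg A j : ℝ) - rowDeg A i| ^ k := by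
        simp only [abs_sub_comm (rowDeg A _ : ℝ)]
    _ ≤ ∑ i, ∑ j, |(conjugatePartition (rowDeg A) j : ℝ) - rowDeg A i| ^ k :=
        sum_le_sum fun i _ =>
          sum_le_sum_of_sum_tsub_le (f := fun m : ℕ => |(m : ℝ) - rowDeg A i| ^ k)
            (convexOn_abs_sub_pow _ k).natCast_sub_le hsum hhinge
    _ = ∑ i, ∑ j, |(conjugatePartition (rowDeg A) i : ℝ) - rowDeg A j| ^ k := by
        rw [sum_sum_abs_sub_pow_comm]
        simp only [abs_sub_comm]

def ferrersMatrix (b : Fin n → ℕ) : Fin n → Fin n → Bool := fun i j => decide ((j : ℕ) < b i)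

lemma rowDeg_ferrersMatrix {b : Fin n → ℕ} (hb : ∀ i, b i ≤ n) (i : Fin n) :
    rowDeg (ferrersMatrix b) i = b i := by
  simp [rowDeg, ferrersMatrix, Fin.card_filter_val_lt, hb i]

lemma colDeg_ferrersMatrix (b : Fin n → ℕ) (j : Fin n) :
    colDeg (ferrersMatrix b) j = conjugatePartition b j := by
  simp only [colDeg, ferrersMatrix, decide_eq_true_eq]
  rfl

end Conjugate

theorem sup_bipartite_eq_sup_conjPartition_general (k : ℕ) :
    sSup (bipartiteDegVals k) = sSup (conjPartitionVals k) := by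
  refine csSup_eq_csSup_of_forall_exists_le ?_ ?_
  · rintro _ ⟨n, hn, A, rfl⟩
    refine ⟨_, ⟨n, hn, rowDeg A, fun i => by simpa using rowDeg_le_card A i, rfl⟩, ?_⟩
    simp only [sum_ite_eq_rowDeg, sum_ite_eq_colDeg]
    exact mul_le_mul_of_nonneg_left (sum_sum_abs_rowDeg_sub_colDeg_pow_le A k) (by positivity)
  · rintro _ ⟨n, hn, b, hb, rfl⟩
    refine ⟨_, ⟨n, hn, ferrersMatrix b, rfl⟩, le_of_eq ?_⟩
    simp only [sum_ite_eq_rowDeg, sum_ite_eq_colDeg, rowDeg_ferrersMatrix hb,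
      colDeg_ferrersMatrix]
    rw [sum_sum_abs_sub_pow_comm]

/-- For every integer `k ≥ 3`, the supremum of the normalized degree-difference sums over all
bipartite graphs equals the corresponding supremum over conjugate partitions. -/
theorem sup_bipartite_eq_sup_conjPartition (k : ℕ) (hk : 3 ≤ k) :
    sSup (bipartiteDegVals k) = sSup (conjPartitionVals k) :=
  sup_bipartite_eq_sup_conjPartition_general k
end

section
/- Let f : [0,1] → [0,1] be a weakly decreasing step function taking finitely many values, let F_f = {(u,v) ∈ [0,1]² : v < f(u)}, and define x_f(u) = λ({t ∈ [0,1] : (u,t) ∈ F_f \ bd(F_f)}) and y_f(v) = λ({u ∈ [0,1] : (u,v) ∈ F_f \ bd(F_f)}), where λ is one-dimensional Lebesgue measure and bd denotes the topological boundary in [0,1]². Then for all s, t ∈ [0,1], either (x_f(s) ≤ t and y_f(t) ≤ s) or (x_f(s) ≥ t and y_f(t) ≥ s). -/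
open MeasureTheory

/-- The unit square `[0,1]² ⊆ ℝ²`. -/
def unitSquare : Set (ℝ × ℝ) := Set.Icc (0 : ℝ) 1 ×ˢ Set.Icc (0 : ℝ) 1

/-- The (generalised) Ferrer diagram `F_f = {(u,v) ∈ [0,1]² : v < f(u)}`. -/
def ferrerDiagram (f : ℝ → ℝ) : Set (ℝ × ℝ) :=
  { p : ℝ × ℝ | p ∈ unitSquare ∧ p.2 < f p.1 }

/-- The topological boundary of a set `F` relative to the subspace `[0,1]²`. -/
def sqBoundary (F : Set (ℝ × ℝ)) : Set (ℝ × ℝ) :=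
  unitSquare ∩ closure F ∩ closure (unitSquare \ F)

/-- `f` is a weakly decreasing step function from `[0,1]` to `[0,1]` taking finitely many
values. -/
def IsStepFn (f : ℝ → ℝ) : Prop :=
  (∀ u ∈ Set.Icc (0 : ℝ) 1, f u ∈ Set.Icc (0 : ℝ) 1) ∧
  AntitoneOn f (Set.Icc (0 : ℝ) 1) ∧ (f '' Set.Icc (0 : ℝ) 1).Finite

/-- `x_f(u)`: the Lebesgue measure of the vertical section of `F_f \ bd(F_f)` at `u`. -/
noncomputable def xf (f : ℝ → ℝ) (u : ℝ) : ℝ :=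
  (volume { t : ℝ | (u, t) ∈ ferrerDiagram f \ sqBoundary (ferrerDiagram f) }).toReal

/-- `y_f(v)`: the Lebesgue measure of the horizontal section of `F_f \ bd(F_f)` at `v`. -/
noncomputable def yf (f : ℝ → ℝ) (v : ℝ) : ℝ :=
  (volume { s : ℝ | (s, v) ∈ ferrerDiagram f \ sqBoundary (ferrerDiagram f) }).toReal

/-- The relative interior `F_f \ bd(F_f)` is downward closed in both coordinates
(within the square), provided `f` is antitone on `[0,1]`. -/
lemma interior_anti (f : ℝ → ℝ) (hA : AntitoneOn f (Set.Icc 0 1))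
    {u v u' v' : ℝ} (hu' : u' ∈ Set.Icc (0:ℝ) 1) (hv' : v' ∈ Set.Icc (0:ℝ) 1)
    (h1 : u' ≤ u) (h2 : v' ≤ v)
    (h : (u, v) ∈ ferrerDiagram f \ sqBoundary (ferrerDiagram f)) :
    (u', v') ∈ ferrerDiagram f \ sqBoundary (ferrerDiagram f) := by
  obtain ⟨hF, hnb⟩ := h
  have hsq : (u, v) ∈ unitSquare := hF.1
  have hu : u ∈ Set.Icc (0:ℝ) 1 := hsq.1
  have hv : v ∈ Set.Icc (0:ℝ) 1 := hsq.2
  have hvf : (u, v).2 < f (u, v).1 := hF.2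
  simp only at hvf
  have hncl : (u, v) ∉ closure (unitSquare \ ferrerDiagram f) := by
    intro hc
    exact hnb ⟨⟨hsq, subset_closure hF⟩, hc⟩
  rw [Metric.mem_closure_iff] at hncl
  push_neg at hncl
  obtain ⟨ε, hε, hball⟩ := hncl
  have hfu' : v' < f u' := lt_of_le_of_lt h2 (lt_of_lt_of_le hvf (hA hu' hu h1))
  refine ⟨⟨⟨hu', hv'⟩, hfu'⟩, ?_⟩
  intro hbd
  have hcl : (u', v') ∈ closure (unitSquare \ ferrerDiagram f) := hbd.2
  obtain ⟨b, hbmem, hbdist⟩ := Metric.mem_closure_iff.mp hcl ε hε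
  obtain ⟨hbsq, hbnF⟩ := hbmem
  have ha : b.1 ∈ Set.Icc (0:ℝ) 1 := hbsq.1
  have hc : b.2 ∈ Set.Icc (0:ℝ) 1 := hbsq.2
  have hfac : f b.1 ≤ b.2 := by
    by_contra hlt
    exact hbnF ⟨hbsq, lt_of_not_ge hlt⟩
  rw [Prod.dist_eq] at hbdist
  have hd1 : dist u' b.1 < ε := lt_of_le_of_lt (le_max_left _ _) hbdist
  have hd2 : dist v' b.2 < ε := lt_of_le_of_lt (le_max_right _ _) hbdist
  rw [Real.dist_eq, abs_sub_lt_iff] at hd1 hd2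
  -- the nearby witness of the complement, pushed up-right to dominate (u,v)
  set A : ℝ := max b.1 u with hA'
  set C : ℝ := max b.2 v with hC'
  have hAmem : A ∈ Set.Icc (0:ℝ) 1 := ⟨le_trans ha.1 (le_max_left _ _), max_le ha.2 hu.2⟩
  have hCmem : C ∈ Set.Icc (0:ℝ) 1 := ⟨le_trans hc.1 (le_max_left _ _), max_le hc.2 hv.2⟩
  have hfAC : f A ≤ C :=
    le_trans (le_trans (hA ha hAmem (le_max_left _ _)) hfac) (le_max_left _ _)
  have hmemB : (A, C) ∈ unitSquare \ ferrerDiagram f := by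
    refine ⟨⟨hAmem, hCmem⟩, ?_⟩
    intro hF'
    exact absurd hF'.2 (not_lt.mpr hfAC)
  have hdu : dist u A < ε := by
    rw [Real.dist_eq, abs_sub_lt_iff]
    rcases le_total b.1 u with h | h
    · rw [hA', max_eq_right h]
      constructor <;> linarith
    · rw [hA', max_eq_left h]
      constructor <;> linarith
  have hdv : dist v C < ε := by
    rw [Real.dist_eq, abs_sub_lt_iff]
    rcases le_total b.2 v with h | h
    · rw [hC', max_eq_right h]
      constructor <;> linarith
    · rw [hC', max_eq_left h]
      constructor <;> linarith
  have := hball (A, C) hmemB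
  rw [Prod.dist_eq] at this
  exact absurd this (not_le.mpr (max_lt hdu hdv))

/-- For every `s, t ∈ [0,1]`, either `x_f(s) ≤ t` and `y_f(t) ≤ s`, or `x_f(s) ≥ t` and
`y_f(t) ≥ s`. -/
theorem xf_yf_dichotomy (f : ℝ → ℝ) (hf : IsStepFn f)
    (s : ℝ) (hs : s ∈ Set.Icc (0 : ℝ) 1) (t : ℝ) (ht : t ∈ Set.Icc (0 : ℝ) 1) :
    (xf f s ≤ t ∧ yf f t ≤ s) ∨ (t ≤ xf f s ∧ s ≤ yf f t) := by
  obtain ⟨hrange, hA, hfin⟩ := hf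
  set S : Set ℝ := { t' : ℝ | (s, t') ∈ ferrerDiagram f \ sqBoundary (ferrerDiagram f) }
    with hS
  set H : Set ℝ := { u : ℝ | (u, t) ∈ ferrerDiagram f \ sqBoundary (ferrerDiagram f) }
    with hH
  have hxf : xf f s = (volume S).toReal := rfl
  have hyf : yf f t = (volume H).toReal := rfl
  have hS1 : S ⊆ Set.Icc 0 1 := fun x hx => hx.1.1.2
  have hH1 : H ⊆ Set.Icc 0 1 := fun x hx => hx.1.1.1
  have hSne : volume S ≠ ⊤ := by
    refine ne_top_of_le_ne_top ?_ (measure_mono hS1)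
    simp [Real.volume_Icc]
  have hHne : volume H ≠ ⊤ := by
    refine ne_top_of_le_ne_top ?_ (measure_mono hH1)
    simp [Real.volume_Icc]
  -- key 1 : t < xf f s → s ≤ yf f t
  have key1 : t < xf f s → s ≤ yf f t := by
    intro h
    have hns : ¬ (S ⊆ Set.Icc 0 t) := by
      intro hsub
      have h1 : volume S ≤ ENNReal.ofReal t := by
        have := measure_mono (μ := volume) hsub
        rwa [Real.volume_Icc, sub_zero] at this
      have : xf f s ≤ t := by
        rw [hxf]
        exact ENNReal.toReal_le_of_le_ofReal ht.1 h1
      linarith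
    rw [Set.not_subset] at hns
    obtain ⟨t', ht'S, ht'n⟩ := hns
    have ht'01 : t' ∈ Set.Icc (0:ℝ) 1 := hS1 ht'S
    have htt' : t ≤ t' := by
      by_contra hlt
      push_neg at hlt
      exact ht'n ⟨ht'01.1, hlt.le⟩
    have hsub : Set.Icc 0 s ⊆ H := by
      intro u hu
      exact interior_anti f hA ⟨hu.1, hu.2.trans hs.2⟩ ht hu.2 htt' ht'S
    have h1 : ENNReal.ofReal s ≤ volume H := by
      have := measure_mono (μ := volume) hsub
      rwa [Real.volume_Icc, sub_zero] at this
    rw [hyf]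
    exact (ENNReal.ofReal_le_iff_le_toReal hHne).mp h1
  -- key 2 : xf f s < t → yf f t ≤ s
  have key2 : xf f s < t → yf f t ≤ s := by
    intro h
    have hHs : H ⊆ Set.Icc 0 s := by
      intro u hu
      refine ⟨(hH1 hu).1, ?_⟩
      by_contra hus
      have hsu : s ≤ u := le_of_lt (lt_of_not_ge hus)
      have hsub : Set.Icc 0 t ⊆ S := by
        intro t'' ht''
        exact interior_anti f hA hs ⟨ht''.1, ht''.2.trans ht.2⟩ hsu ht''.2 hu
      have h1 : ENNReal.ofReal t ≤ volume S := by
        have := measure_mono (μ := volume) hsub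
        rwa [Real.volume_Icc, sub_zero] at this
      have : t ≤ xf f s := by
        rw [hxf]
        exact (ENNReal.ofReal_le_iff_le_toReal hSne).mp h1
      linarith
    have h1 : volume H ≤ ENNReal.ofReal s := by
      have := measure_mono (μ := volume) hHs
      rwa [Real.volume_Icc, sub_zero] at this
    rw [hyf]
    exact ENNReal.toReal_le_of_le_ofReal hs.1 h1
  rcases lt_trichotomy (xf f s) t with h | h | h
  · exact Or.inl ⟨le_of_lt h, key2 h⟩
  · rcases le_total (yf f t) s with h' | h'
    · exact Or.inl ⟨le_of_eq h, h'⟩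
    · exact Or.inr ⟨ge_of_eq h, h'⟩
  · exact Or.inr ⟨le_of_lt h, key1 h⟩
end

section
/- Let δ ∈ (1/2, 1]. Let f : [0,1] → [0,1] be a weakly decreasing step function taking finitely many values, let F_f = {(u,v) ∈ [0,1]² : v < f(u)}, and on the unit square [0,1]² equipped with two-dimensional Lebesgue (product) probability measure define X_f(u,v) = λ({t ∈ [0,1] : (u,t) ∈ F_f \ bd(F_f)}) and Y_f(u,v) = λ({s ∈ [0,1] : (s,v) ∈ F_f \ bd(F_f)}), where λ is one-dimensional Lebesgue measure. If 1 - δ ≤ y_f(δ) ≤ δ, where y_f(v) = λ({s : (s,v) ∈ F_f \ bd(F_f)}), then P(X_f > Y_f + δ) ≤ δ(1 - δ). The same conclusion holds with the roles of X_f and Y_f interchanged (assuming 1 - δ ≤ x_f(δ) ≤ δ). -/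
open MeasureTheory

/-- The Lebesgue product probability measure on the unit square. -/
noncomputable def sqMeasure : Measure (ℝ × ℝ) := volume.restrict unitSquare

namespace ProbAux

/-- The Ferrer diagram with its relative boundary removed. -/
def G (f : ℝ → ℝ) : Set (ℝ × ℝ) := ferrerDiagram f \ sqBoundary (ferrerDiagram f)

lemma mem_G_iff {f : ℝ → ℝ} {p : ℝ × ℝ} :
    p ∈ G f ↔ p ∈ ferrerDiagram f ∧ p ∉ closure (unitSquare \ ferrerDiagram f) := by
  constructor
  · rintro ⟨hF, hbd⟩
    exact ⟨hF, fun hc => hbd ⟨⟨hF.1, subset_closure hF⟩, hc⟩⟩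
  · rintro ⟨hF, hc⟩
    exact ⟨hF, fun hbd => hc hbd.2⟩

lemma G_subset_sq {f : ℝ → ℝ} : G f ⊆ unitSquare := fun _ hp => hp.1.1

lemma mem_sq_iff {p : ℝ × ℝ} :
    p ∈ unitSquare ↔ p.1 ∈ Set.Icc (0:ℝ) 1 ∧ p.2 ∈ Set.Icc (0:ℝ) 1 := Iff.rfl

/-- The closure of `[0,1]² \ F_f` is closed under moving up (within the square). -/
lemma closure_up {f : ℝ → ℝ} {a b b' : ℝ} (hbb' : b ≤ b') (hb'1 : b' ≤ 1)
    (h : (a, b) ∈ closure (unitSquare \ ferrerDiagram f)) :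
    (a, b') ∈ closure (unitSquare \ ferrerDiagram f) := by
  set φ : ℝ × ℝ → ℝ × ℝ := fun p => (p.1, min (p.2 + (b' - b)) 1) with hφ
  have hcont : Continuous φ := by fun_prop
  have hmaps : Set.MapsTo φ (unitSquare \ ferrerDiagram f) (unitSquare \ ferrerDiagram f) := by
    rintro ⟨x, y⟩ ⟨⟨hx, hy⟩, hnF⟩
    have hy' : y ≤ min (y + (b' - b)) 1 := le_min (by linarith) hy.2
    refine ⟨⟨hx, ⟨le_trans hy.1 hy', min_le_right _ _⟩⟩, ?_⟩
    rintro ⟨hsq, hlt⟩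
    exact hnF ⟨⟨hx, hy⟩, lt_of_le_of_lt hy' hlt⟩
  have := map_mem_closure hcont h hmaps
  have heq : φ (a, b) = (a, b') := by
    simp only [hφ]
    have : b + (b' - b) = b' := by ring
    rw [this, min_eq_left hb'1]
  rwa [heq] at this

/-- The closure of `[0,1]² \ F_f` is closed under moving right (within the square),
provided `f` is weakly decreasing. -/
lemma closure_right {f : ℝ → ℝ} (hf : AntitoneOn f (Set.Icc 0 1)) {a a' b : ℝ}
    (haa' : a ≤ a') (ha'1 : a' ≤ 1)
    (h : (a, b) ∈ closure (unitSquare \ ferrerDiagram f)) :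
    (a', b) ∈ closure (unitSquare \ ferrerDiagram f) := by
  set φ : ℝ × ℝ → ℝ × ℝ := fun p => (min (p.1 + (a' - a)) 1, p.2) with hφ
  have hcont : Continuous φ := by fun_prop
  have hmaps : Set.MapsTo φ (unitSquare \ ferrerDiagram f) (unitSquare \ ferrerDiagram f) := by
    rintro ⟨x, y⟩ ⟨⟨hx, hy⟩, hnF⟩
    have hx' : x ≤ min (x + (a' - a)) 1 := le_min (by linarith) hx.2
    have hxmem : min (x + (a' - a)) 1 ∈ Set.Icc (0:ℝ) 1 :=
      ⟨le_trans hx.1 hx', min_le_right _ _⟩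
    refine ⟨⟨hxmem, hy⟩, ?_⟩
    rintro ⟨hsq, hlt⟩
    have hfx : f x ≤ y := by
      by_contra hcon
      exact hnF ⟨⟨hx, hy⟩, lt_of_not_ge hcon⟩
    have : f (min (x + (a' - a)) 1) ≤ f x := hf hx hxmem hx'
    exact absurd hlt (not_lt.mpr (le_trans this hfx))
  have := map_mem_closure hcont h hmaps
  have heq : φ (a, b) = (a', b) := by
    simp only [hφ]
    have : a + (a' - a) = a' := by ring
    rw [this, min_eq_left ha'1]
  rwa [heq] at this

/-- `G f` is closed under moving down (to nonnegative heights). -/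
lemma down_move {f : ℝ → ℝ} {u t t' : ℝ} (h : (u, t) ∈ G f) (ht'0 : 0 ≤ t') (ht' : t' ≤ t) :
    (u, t') ∈ G f := by
  rw [mem_G_iff] at h ⊢
  obtain ⟨⟨hsq, hlt⟩, hcl⟩ := h
  have ht1 : t ≤ 1 := hsq.2.2
  refine ⟨⟨⟨hsq.1, ⟨ht'0, le_trans ht' ht1⟩⟩, lt_of_le_of_lt ht' hlt⟩, ?_⟩
  exact fun hc => hcl (closure_up ht' ht1 hc)

/-- `G f` is closed under moving left (to nonnegative abscissae). -/
lemma left_move {f : ℝ → ℝ} (hf : AntitoneOn f (Set.Icc 0 1)) {u u' t : ℝ}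
    (h : (u, t) ∈ G f) (hu'0 : 0 ≤ u') (hu' : u' ≤ u) :
    (u', t) ∈ G f := by
  rw [mem_G_iff] at h ⊢
  obtain ⟨⟨hsq, hlt⟩, hcl⟩ := h
  have hu1 : u ≤ 1 := hsq.1.2
  have hu'mem : u' ∈ Set.Icc (0:ℝ) 1 := ⟨hu'0, le_trans hu' hu1⟩
  refine ⟨⟨⟨hu'mem, hsq.2⟩, lt_of_lt_of_le hlt (hf hu'mem hsq.1 hu')⟩, ?_⟩
  exact fun hc => hcl (closure_right hf hu' hu1 hc)

lemma vert_subset {f : ℝ → ℝ} (u : ℝ) :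
    { t : ℝ | (u, t) ∈ G f } ⊆ Set.Icc (0:ℝ) 1 := fun t ht => (G_subset_sq ht).2

lemma horiz_subset {f : ℝ → ℝ} (v : ℝ) :
    { s : ℝ | (s, v) ∈ G f } ⊆ Set.Icc (0:ℝ) 1 := fun s hs => (G_subset_sq hs).1

lemma vol_vert_ne_top {f : ℝ → ℝ} (u : ℝ) :
    volume { t : ℝ | (u, t) ∈ G f } ≠ ⊤ :=
  ne_top_of_le_ne_top (by simp [Real.volume_Icc]) (measure_mono (vert_subset u))

lemma vol_horiz_ne_top {f : ℝ → ℝ} (v : ℝ) :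
    volume { s : ℝ | (s, v) ∈ G f } ≠ ⊤ :=
  ne_top_of_le_ne_top (by simp [Real.volume_Icc]) (measure_mono (horiz_subset v))

lemma xf_eq {f : ℝ → ℝ} (u : ℝ) : xf f u = (volume { t : ℝ | (u, t) ∈ G f }).toReal := rfl

lemma yf_eq {f : ℝ → ℝ} (v : ℝ) : yf f v = (volume { s : ℝ | (s, v) ∈ G f }).toReal := rfl

lemma xf_le_one {f : ℝ → ℝ} (u : ℝ) : xf f u ≤ 1 := by
  rw [xf_eq]
  have h := measure_mono (α := ℝ) (μ := volume) (vert_subset (f := f) u)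
  calc (volume { t : ℝ | (u, t) ∈ G f }).toReal ≤ (volume (Set.Icc (0:ℝ) 1)).toReal :=
        ENNReal.toReal_mono (by simp [Real.volume_Icc]) h
    _ = 1 := by simp [Real.volume_Icc]

lemma yf_le_one {f : ℝ → ℝ} (v : ℝ) : yf f v ≤ 1 := by
  rw [yf_eq]
  have h := measure_mono (α := ℝ) (μ := volume) (horiz_subset (f := f) v)
  calc (volume { s : ℝ | (s, v) ∈ G f }).toReal ≤ (volume (Set.Icc (0:ℝ) 1)).toReal :=
        ENNReal.toReal_mono (by simp [Real.volume_Icc]) h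
    _ = 1 := by simp [Real.volume_Icc]

lemma xf_nonneg {f : ℝ → ℝ} (u : ℝ) : 0 ≤ xf f u := ENNReal.toReal_nonneg

lemma yf_nonneg {f : ℝ → ℝ} (v : ℝ) : 0 ≤ yf f v := ENNReal.toReal_nonneg

/-- If the vertical section at `u` has measure `> δ ≥ 0`, it has an element `> δ`. -/
lemma exists_gt_of_xf_gt {f : ℝ → ℝ} {u δ : ℝ} (hδ0 : 0 ≤ δ) (h : δ < xf f u) :
    ∃ t, (u, t) ∈ G f ∧ δ < t := by
  by_contra hcon
  push_neg at hcon
  have hsub : { t : ℝ | (u, t) ∈ G f } ⊆ Set.Icc (0:ℝ) δ := by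
    intro t ht
    exact ⟨(vert_subset u ht).1, hcon t ht⟩
  have := ENNReal.toReal_mono (by simp [Real.volume_Icc]) (measure_mono (μ := volume) hsub)
  rw [← xf_eq] at this
  simp [Real.volume_Icc, hδ0] at this
  linarith

lemma exists_gt_of_yf_gt {f : ℝ → ℝ} {v δ : ℝ} (hδ0 : 0 ≤ δ) (h : δ < yf f v) :
    ∃ s, (s, v) ∈ G f ∧ δ < s := by
  by_contra hcon
  push_neg at hcon
  have hsub : { s : ℝ | (s, v) ∈ G f } ⊆ Set.Icc (0:ℝ) δ := by
    intro s hs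
    exact ⟨(horiz_subset v hs).1, hcon s hs⟩
  have := ENNReal.toReal_mono (by simp [Real.volume_Icc]) (measure_mono (μ := volume) hsub)
  rw [← yf_eq] at this
  simp [Real.volume_Icc, hδ0] at this
  linarith

/-- `{u : xf u > δ}` is contained in the horizontal section at `δ`, for `0 ≤ δ`. -/
lemma gt_subset_horiz {f : ℝ → ℝ} {δ : ℝ} (hδ0 : 0 ≤ δ) :
    { u : ℝ | δ < xf f u } ⊆ { s : ℝ | (s, δ) ∈ G f } := by
  intro u hu
  obtain ⟨t, htG, htδ⟩ := exists_gt_of_xf_gt hδ0 hu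
  exact down_move htG hδ0 (le_of_lt htδ)

/-- `{v : yf v > δ}` is contained in the vertical section at `δ`, for `0 ≤ δ`. -/
lemma gt_subset_vert {f : ℝ → ℝ} (hf : AntitoneOn f (Set.Icc 0 1)) {δ : ℝ} (hδ0 : 0 ≤ δ) :
    { v : ℝ | δ < yf f v } ⊆ { t : ℝ | (δ, t) ∈ G f } := by
  intro v hv
  obtain ⟨s, hsG, hsδ⟩ := exists_gt_of_yf_gt hδ0 hv
  exact left_move hf hsG hδ0 (le_of_lt hsδ)

/-- `yf` is antitone on `[0,1]`. -/
lemma yf_antitone {f : ℝ → ℝ} {v v' : ℝ} (hv0 : 0 ≤ v) (hvv' : v ≤ v') (hv'1 : v' ≤ 1) :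
    yf f v' ≤ yf f v := by
  have hsub : { s : ℝ | (s, v') ∈ G f } ⊆ { s : ℝ | (s, v) ∈ G f } :=
    fun s hs => down_move hs hv0 hvv'
  exact ENNReal.toReal_mono (vol_horiz_ne_top v) (measure_mono hsub)

/-- `xf` is antitone on `[0,1]`. -/
lemma xf_antitone {f : ℝ → ℝ} (hf : AntitoneOn f (Set.Icc 0 1)) {u u' : ℝ}
    (hu0 : 0 ≤ u) (huu' : u ≤ u') (hu'1 : u' ≤ 1) :
    xf f u' ≤ xf f u := by
  have hsub : { t : ℝ | (u', t) ∈ G f } ⊆ { t : ℝ | (u, t) ∈ G f } :=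
    fun t ht => left_move hf ht hu0 huu'
  exact ENNReal.toReal_mono (vol_vert_ne_top u) (measure_mono hsub)

end ProbAux

open ProbAux in
/-- If `1 - δ ≤ y_f(δ) ≤ δ` for `δ ∈ (1/2, 1]`, then `P(X_f > Y_f + δ) ≤ δ(1 - δ)`, where
`X_f(u,v) = x_f(u)` and `Y_f(u,v) = y_f(v)` on the unit square with Lebesgue product
probability measure; the same holds with the roles of `X_f` and `Y_f` interchanged. -/
theorem prob_gt_add_delta_le (δ : ℝ) (hδ : δ ∈ Set.Ioc (1 / 2 : ℝ) 1)
    (f : ℝ → ℝ) (hf : IsStepFn f) :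
    ((1 - δ ≤ yf f δ ∧ yf f δ ≤ δ) →
      (sqMeasure { p : ℝ × ℝ | yf f p.2 + δ < xf f p.1 }).toReal ≤ δ * (1 - δ)) ∧
    ((1 - δ ≤ xf f δ ∧ xf f δ ≤ δ) →
      (sqMeasure { p : ℝ × ℝ | xf f p.1 + δ < yf f p.2 }).toReal ≤ δ * (1 - δ)) := by
  obtain ⟨hδhalf, hδ1⟩ := hδ
  have hδ0 : (0:ℝ) ≤ δ := by linarith
  have h1δ0 : (0:ℝ) ≤ 1 - δ := by linarith
  have hprod0 : (0:ℝ) ≤ δ * (1 - δ) := mul_nonneg hδ0 h1δ0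
  have hfant : AntitoneOn f (Set.Icc 0 1) := hf.2.1
  have hsqmeas : MeasurableSet unitSquare :=
    (measurableSet_Icc).prod (measurableSet_Icc)
  constructor
  · rintro ⟨hy1, hy2⟩
    -- Event ⊆ {u : δ < xf u} ×ˢ ({v : yf v < 1 - δ} ∩ [0,1])
    set A : Set ℝ := { u : ℝ | δ < xf f u } with hA
    set B : Set ℝ := { v : ℝ | yf f v < 1 - δ } ∩ Set.Icc (0:ℝ) 1 with hB
    have hsub : { p : ℝ × ℝ | yf f p.2 + δ < xf f p.1 } ∩ unitSquare ⊆ A ×ˢ B := by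
      rintro ⟨u, v⟩ ⟨hlt, hu, hv⟩
      simp only [Set.mem_setOf_eq] at hlt
      have h1 : δ < xf f u := lt_of_le_of_lt (by linarith [yf_nonneg (f := f) v]) hlt
      have h2 : yf f v < 1 - δ := by
        have := xf_le_one (f := f) u
        linarith
      exact ⟨h1, h2, hv⟩
    have hmeas : sqMeasure { p : ℝ × ℝ | yf f p.2 + δ < xf f p.1 }
        ≤ volume A * volume B := by
      rw [sqMeasure, Measure.restrict_apply' hsqmeas]
      calc volume ({ p : ℝ × ℝ | yf f p.2 + δ < xf f p.1 } ∩ unitSquare)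
          ≤ volume (A ×ˢ B) := measure_mono hsub
        _ = volume A * volume B := by
            rw [Measure.volume_eq_prod]; exact Measure.prod_prod A B
    have hvolA : volume A ≤ ENNReal.ofReal δ := by
      calc volume A ≤ volume { s : ℝ | (s, δ) ∈ G f } :=
            measure_mono (gt_subset_horiz hδ0)
        _ = ENNReal.ofReal (yf f δ) := by
            rw [yf_eq]; exact (ENNReal.ofReal_toReal (vol_horiz_ne_top δ)).symm
        _ ≤ ENNReal.ofReal δ := ENNReal.ofReal_le_ofReal hy2
    have hvolB : volume B ≤ ENNReal.ofReal (1 - δ) := by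
      have hBsub : B ⊆ Set.Ioc δ 1 := by
        rintro v ⟨hvlt, hv0, hv1⟩
        simp only [Set.mem_setOf_eq] at hvlt
        refine ⟨?_, hv1⟩
        by_contra hcon
        push_neg at hcon
        have := yf_antitone (f := f) hv0 hcon hδ1
        linarith
      calc volume B ≤ volume (Set.Ioc δ 1) := measure_mono hBsub
        _ = ENNReal.ofReal (1 - δ) := by rw [Real.volume_Ioc]
    have hfinal : sqMeasure { p : ℝ × ℝ | yf f p.2 + δ < xf f p.1 }
        ≤ ENNReal.ofReal (δ * (1 - δ)) := by
      calc sqMeasure { p : ℝ × ℝ | yf f p.2 + δ < xf f p.1 }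
          ≤ volume A * volume B := hmeas
        _ ≤ ENNReal.ofReal δ * ENNReal.ofReal (1 - δ) := mul_le_mul' hvolA hvolB
        _ = ENNReal.ofReal (δ * (1 - δ)) := (ENNReal.ofReal_mul hδ0).symm
    exact ENNReal.toReal_le_of_le_ofReal hprod0 hfinal
  · rintro ⟨hx1, hx2⟩
    set A : Set ℝ := { u : ℝ | xf f u < 1 - δ } ∩ Set.Icc (0:ℝ) 1 with hA
    set B : Set ℝ := { v : ℝ | δ < yf f v } with hB
    have hsub : { p : ℝ × ℝ | xf f p.1 + δ < yf f p.2 } ∩ unitSquare ⊆ A ×ˢ B := by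
      rintro ⟨u, v⟩ ⟨hlt, hu, hv⟩
      simp only [Set.mem_setOf_eq] at hlt
      have h1 : δ < yf f v := lt_of_le_of_lt (by linarith [xf_nonneg (f := f) u]) hlt
      have h2 : xf f u < 1 - δ := by
        have := yf_le_one (f := f) v
        linarith
      exact ⟨⟨h2, hu⟩, h1⟩
    have hmeas : sqMeasure { p : ℝ × ℝ | xf f p.1 + δ < yf f p.2 }
        ≤ volume A * volume B := by
      rw [sqMeasure, Measure.restrict_apply' hsqmeas]
      calc volume ({ p : ℝ × ℝ | xf f p.1 + δ < yf f p.2 } ∩ unitSquare)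
          ≤ volume (A ×ˢ B) := measure_mono hsub
        _ = volume A * volume B := by
            rw [Measure.volume_eq_prod]; exact Measure.prod_prod A B
    have hvolB : volume B ≤ ENNReal.ofReal δ := by
      calc volume B ≤ volume { t : ℝ | (δ, t) ∈ G f } :=
            measure_mono (gt_subset_vert hfant hδ0)
        _ = ENNReal.ofReal (xf f δ) := by
            rw [xf_eq]; exact (ENNReal.ofReal_toReal (vol_vert_ne_top δ)).symm
        _ ≤ ENNReal.ofReal δ := ENNReal.ofReal_le_ofReal hx2
    have hvolA : volume A ≤ ENNReal.ofReal (1 - δ) := by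
      have hAsub : A ⊆ Set.Ioc δ 1 := by
        rintro u ⟨hult, hu0, hu1⟩
        simp only [Set.mem_setOf_eq] at hult
        refine ⟨?_, hu1⟩
        by_contra hcon
        push_neg at hcon
        have := xf_antitone hfant (f := f) hu0 hcon hδ1
        linarith
      calc volume A ≤ volume (Set.Ioc δ 1) := measure_mono hAsub
        _ = ENNReal.ofReal (1 - δ) := by rw [Real.volume_Ioc]
    have hfinal : sqMeasure { p : ℝ × ℝ | xf f p.1 + δ < yf f p.2 }
        ≤ ENNReal.ofReal (δ * (1 - δ)) := by
      calc sqMeasure { p : ℝ × ℝ | xf f p.1 + δ < yf f p.2 }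
          ≤ volume A * volume B := hmeas
        _ ≤ ENNReal.ofReal (1 - δ) * ENNReal.ofReal δ := mul_le_mul' hvolA hvolB
        _ = ENNReal.ofReal (δ * (1 - δ)) := by
            rw [← ENNReal.ofReal_mul h1δ0]; ring_nf
    exact ENNReal.toReal_le_of_le_ofReal hprod0 hfinal
end

section
/- For every δ ∈ (1/2, 1], the supremum over all weakly decreasing step functions f : [0,1] → [0,1] taking finitely many values of P(|X_f - Y_f| > δ) equals 2δ(1 - δ), where, with F_f = {(u,v) ∈ [0,1]² : v < f(u)} and [0,1]² carrying the two-dimensional Lebesgue product probability measure, X_f(u,v) = λ({t ∈ [0,1] : (u,t) ∈ F_f \ bd(F_f)}) and Y_f(u,v) = λ({s ∈ [0,1] : (s,v) ∈ F_f \ bd(F_f)}). In particular, P(|X_f - Y_f| > δ) ≤ 2δ(1 - δ) for every such f. -/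
open MeasureTheory

/-- the horizontal level-measure function -/
noncomputable def gg (f : ℝ → ℝ) (v : ℝ) : ℝ :=
  (volume { s : ℝ | s ∈ Set.Icc (0 : ℝ) 1 ∧ v < f s }).toReal

lemma gg_set_subset (f : ℝ → ℝ) (v : ℝ) :
    { s : ℝ | s ∈ Set.Icc (0 : ℝ) 1 ∧ v < f s } ⊆ Set.Icc (0:ℝ) 1 := fun s hs => hs.1

lemma gg_vol_le_one (f : ℝ → ℝ) (v : ℝ) :
    volume { s : ℝ | s ∈ Set.Icc (0 : ℝ) 1 ∧ v < f s } ≤ 1 := by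
  refine le_trans (measure_mono (gg_set_subset f v)) ?_
  simp [Real.volume_Icc]

lemma gg_vol_ne_top (f : ℝ → ℝ) (v : ℝ) :
    volume { s : ℝ | s ∈ Set.Icc (0 : ℝ) 1 ∧ v < f s } ≠ ⊤ :=
  ne_top_of_le_ne_top (by simp) (gg_vol_le_one f v)

lemma gg_nonneg (f : ℝ → ℝ) (v : ℝ) : 0 ≤ gg f v := ENNReal.toReal_nonneg

lemma gg_le_one (f : ℝ → ℝ) (v : ℝ) : gg f v ≤ 1 := by
  have := ENNReal.toReal_mono (by simp) (gg_vol_le_one f v)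
  simpa [gg] using this

lemma gg_anti (f : ℝ → ℝ) {v v' : ℝ} (h : v ≤ v') : gg f v' ≤ gg f v := by
  apply ENNReal.toReal_mono (gg_vol_ne_top f v)
  exact measure_mono (fun s hs => ⟨hs.1, lt_of_le_of_lt h hs.2⟩)

/-- G2 -/
lemma le_gg {f : ℝ → ℝ} (hf : IsStepFn f) {u v : ℝ} (hu : u ∈ Set.Icc (0:ℝ) 1)
    (h : v < f u) : u ≤ gg f v := by
  have hsub : Set.Icc (0:ℝ) u ⊆ { s : ℝ | s ∈ Set.Icc (0 : ℝ) 1 ∧ v < f s } := by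
    intro s hs
    have hs1 : s ∈ Set.Icc (0:ℝ) 1 := ⟨hs.1, le_trans hs.2 hu.2⟩
    exact ⟨hs1, lt_of_lt_of_le h (hf.2.1 hs1 hu hs.2)⟩
  have := measure_mono (μ := volume) hsub
  rw [Real.volume_Icc] at this
  have h2 := ENNReal.toReal_mono (gg_vol_ne_top f v) this
  rw [ENNReal.toReal_ofReal (by linarith [hu.1] : (0:ℝ) ≤ u - 0)] at h2
  simpa [gg] using h2

/-- G1 -/
lemma lt_of_lt_gg {f : ℝ → ℝ} (hf : IsStepFn f) {u v : ℝ} (hu : u ∈ Set.Icc (0:ℝ) 1)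
    (h : u < gg f v) : v < f u := by
  by_contra hc
  push_neg at hc
  have hsub : { s : ℝ | s ∈ Set.Icc (0 : ℝ) 1 ∧ v < f s } ⊆ Set.Ico (0:ℝ) u := by
    intro s hs
    refine ⟨hs.1.1, ?_⟩
    by_contra hsu
    push_neg at hsu
    exact absurd (lt_of_lt_of_le hs.2 (le_trans (hf.2.1 hu hs.1 hsu) hc)) (lt_irrefl v)
  have := measure_mono (μ := volume) hsub
  rw [Real.volume_Ico] at this
  have h2 := ENNReal.toReal_mono ENNReal.ofReal_ne_top this
  rw [ENNReal.toReal_ofReal (by linarith [hu.1] : (0:ℝ) ≤ u - 0)] at h2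
  have h3 : gg f v ≤ u := by simpa [gg] using h2
  exact absurd (lt_of_lt_of_le h h3) (lt_irrefl u)

def LocConst (f : ℝ → ℝ) (u : ℝ) : Prop :=
  ∃ ε > 0, ∀ s ∈ Set.Icc (0:ℝ) 1, |s - u| < ε → f s = f u

lemma finite_nonLC {f : ℝ → ℝ} (hf : IsStepFn f) :
    {u : ℝ | u ∈ Set.Icc (0:ℝ) 1 ∧ ¬ LocConst f u}.Finite := by
  set E := {u : ℝ | u ∈ Set.Icc (0:ℝ) 1 ∧ ¬ LocConst f u} with hE
  have key : ∀ c : ℝ, {u : ℝ | u ∈ E ∧ f u = c}.Finite := by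
    intro c
    set Ec := {u : ℝ | u ∈ E ∧ f u = c} with hEc
    by_cases hne : Ec.Nonempty
    · have hbdd : BddBelow Ec ∧ BddAbove Ec := by
        constructor
        · exact ⟨0, fun x hx => hx.1.1.1⟩
        · exact ⟨1, fun x hx => hx.1.1.2⟩
      have hsub : Ec ⊆ {sInf Ec, sSup Ec} := by
        intro u hu
        by_contra hmem
        simp only [Set.mem_insert_iff, Set.mem_singleton_iff] at hmem
        push_neg at hmem
        have hlt1 : sInf Ec < u :=
          lt_of_le_of_ne (csInf_le hbdd.1 hu) (Ne.symm hmem.1)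
        have hlt2 : u < sSup Ec :=
          lt_of_le_of_ne (le_csSup hbdd.2 hu) hmem.2
        obtain ⟨u1, hu1, hu1lt⟩ := (csInf_lt_iff hbdd.1 hne).1 hlt1
        obtain ⟨u2, hu2, hu2lt⟩ := (lt_csSup_iff hbdd.2 hne).1 hlt2
        apply hu.1.2
        refine ⟨min (u - u1) (u2 - u), lt_min (by linarith) (by linarith), ?_⟩
        intro s hs hdist
        have h1 : u1 < s := by
          have := abs_lt.1 hdist
          have := min_le_left (u - u1) (u2 - u)
          linarith [this, (abs_lt.1 hdist).1]
        have h2 : s < u2 := by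
          have := min_le_right (u - u1) (u2 - u)
          linarith [(abs_lt.1 hdist).2]
        have hle1 : f s ≤ f u1 := hf.2.1 hu1.1.1 hs (le_of_lt h1)
        have hle2 : f u2 ≤ f s := hf.2.1 hs hu2.1.1 (le_of_lt h2)
        rw [hu1.2, hu2.2] at *
        have : f s = c := le_antisymm hle1 hle2
        rw [this, hu.2]
      exact ((Set.finite_singleton (sSup Ec)).insert (sInf Ec)).subset hsub
    · rw [Set.not_nonempty_iff_eq_empty] at hne
      rw [hne]; exact Set.finite_empty
  have hcover : E ⊆ ⋃ c ∈ f '' Set.Icc (0:ℝ) 1, {u : ℝ | u ∈ E ∧ f u = c} := by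
    intro u hu
    exact Set.mem_biUnion ⟨u, hu.1, rfl⟩ ⟨hu, rfl⟩
  exact (hf.2.2.biUnion (fun c _ => key c)).subset hcover

lemma not_mem_closure_diff {f : ℝ → ℝ} (hf : IsStepFn f) {u t : ℝ}
    (hu : u ∈ Set.Icc (0:ℝ) 1) (hLC : LocConst f u) (ht : t < f u) :
    (u, t) ∉ closure (unitSquare \ ferrerDiagram f) := by
  obtain ⟨ε₀, hε₀, hconst⟩ := hLC
  intro hcl
  rw [Metric.mem_closure_iff] at hcl
  obtain ⟨b, hb, hdist⟩ := hcl (min ε₀ (f u - t)) (lt_min hε₀ (by linarith))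
  have hfb : f b.1 ≤ b.2 := not_lt.1 (fun hlt => hb.2 ⟨hb.1, hlt⟩)
  rw [Prod.dist_eq] at hdist
  have hd1 : dist u b.1 < ε₀ :=
    lt_of_lt_of_le (lt_of_le_of_lt (le_max_left _ _) hdist) (min_le_left _ _)
  have hd2 : dist t b.2 < f u - t :=
    lt_of_lt_of_le (lt_of_le_of_lt (le_max_right _ _) hdist) (min_le_right _ _)
  have hb1 : f b.1 = f u := by
    apply hconst b.1 hb.1.1
    rw [Real.dist_eq, abs_sub_comm] at hd1
    exact hd1
  rw [Real.dist_eq] at hd2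
  have : f u ≤ b.2 := hb1 ▸ hfb
  have : f u - t ≤ |t - b.2| := by
    rw [abs_sub_comm, abs_of_nonneg (by linarith)]
    linarith
  linarith

lemma xf_eq {f : ℝ → ℝ} (hf : IsStepFn f) {u : ℝ} (hu : u ∈ Set.Icc (0:ℝ) 1)
    (hLC : LocConst f u) : xf f u = f u := by
  have hfu := hf.1 u hu
  have hset : { t : ℝ | (u, t) ∈ ferrerDiagram f \ sqBoundary (ferrerDiagram f) }
      = Set.Ico (0:ℝ) (f u) := by
    ext t
    constructor
    · rintro ⟨⟨⟨_, ht01⟩, hlt⟩, _⟩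
      exact ⟨ht01.1, hlt⟩
    · intro ht
      refine ⟨⟨⟨hu, ⟨ht.1, le_trans (le_of_lt ht.2) hfu.2⟩⟩, ht.2⟩, ?_⟩
      intro hbd
      exact not_mem_closure_diff hf hu hLC ht.2 hbd.2
  rw [xf, hset, Real.volume_Ico, ENNReal.toReal_ofReal (by linarith [hfu.1])]
  simp

lemma yf_eq {f : ℝ → ℝ} (hf : IsStepFn f) {v : ℝ} (hv : v ∈ Set.Icc (0:ℝ) 1) :
    yf f v = gg f v := by
  have hSL : { s : ℝ | (s, v) ∈ ferrerDiagram f \ sqBoundary (ferrerDiagram f) }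
      ⊆ { s : ℝ | s ∈ Set.Icc (0 : ℝ) 1 ∧ v < f s } := by
    rintro s ⟨⟨⟨hs01, _⟩, hlt⟩, _⟩; exact ⟨hs01, hlt⟩
  have hLS : { s : ℝ | s ∈ Set.Icc (0 : ℝ) 1 ∧ v < f s } \
      {u : ℝ | u ∈ Set.Icc (0:ℝ) 1 ∧ ¬ LocConst f u}
      ⊆ { s : ℝ | (s, v) ∈ ferrerDiagram f \ sqBoundary (ferrerDiagram f) } := by
    rintro s ⟨⟨hs01, hlt⟩, hsE⟩
    have hLC : LocConst f s := by
      by_contra h; exact hsE ⟨hs01, h⟩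
    refine ⟨⟨⟨hs01, hv⟩, hlt⟩, ?_⟩
    intro hbd
    exact not_mem_closure_diff hf hs01 hLC hlt hbd.2
  have hE0 : volume {u : ℝ | u ∈ Set.Icc (0:ℝ) 1 ∧ ¬ LocConst f u} = 0 :=
    (finite_nonLC hf).measure_zero _
  have h1 := measure_mono (μ := volume) hSL
  have h2 : volume { s : ℝ | s ∈ Set.Icc (0 : ℝ) 1 ∧ v < f s }
      ≤ volume { s : ℝ | (s, v) ∈ ferrerDiagram f \ sqBoundary (ferrerDiagram f) } := by
    calc volume { s : ℝ | s ∈ Set.Icc (0 : ℝ) 1 ∧ v < f s }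
        = volume ({ s : ℝ | s ∈ Set.Icc (0 : ℝ) 1 ∧ v < f s } \
          {u : ℝ | u ∈ Set.Icc (0:ℝ) 1 ∧ ¬ LocConst f u}) := (measure_diff_null hE0).symm
      _ ≤ _ := measure_mono hLS
  rw [yf, gg, le_antisymm h1 h2]

lemma measure_event {f : ℝ → ℝ} (hf : IsStepFn f) (δ : ℝ) :
    sqMeasure { p : ℝ × ℝ | δ < |xf f p.1 - yf f p.2| }
      = volume (unitSquare ∩ { p : ℝ × ℝ | δ < |f p.1 - gg f p.2| }) := by
  have hsq : MeasurableSet unitSquare := measurableSet_Icc.prod measurableSet_Icc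
  rw [sqMeasure, Measure.restrict_apply' hsq]
  set N : Set (ℝ × ℝ) :=
    {u : ℝ | u ∈ Set.Icc (0:ℝ) 1 ∧ ¬ LocConst f u} ×ˢ (Set.univ : Set ℝ) with hNdef
  have hN0 : volume N = 0 := by
    rw [hNdef, Measure.volume_eq_prod, Measure.prod_prod,
      (finite_nonLC hf).measure_zero, zero_mul]
  have hkey : ({ p : ℝ × ℝ | δ < |xf f p.1 - yf f p.2| } ∩ unitSquare) \ N
      = (unitSquare ∩ { p : ℝ × ℝ | δ < |f p.1 - gg f p.2| }) \ N := by
    ext p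
    simp only [Set.mem_diff, Set.mem_inter_iff, Set.mem_setOf_eq, hNdef, Set.mem_prod,
      Set.mem_univ, and_true]
    constructor
    · rintro ⟨⟨hcond, hsq'⟩, hpN⟩
      have hLC : LocConst f p.1 := by
        by_contra h
        exact hpN ⟨hsq'.1, h⟩
      rw [xf_eq hf hsq'.1 hLC, yf_eq hf hsq'.2] at hcond
      exact ⟨⟨hsq', hcond⟩, hpN⟩
    · rintro ⟨⟨hsq', hcond⟩, hpN⟩
      have hLC : LocConst f p.1 := by
        by_contra h
        exact hpN ⟨hsq'.1, h⟩
      rw [← xf_eq hf hsq'.1 hLC, ← yf_eq hf hsq'.2] at hcond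
      exact ⟨⟨hcond, hsq'⟩, hpN⟩
  calc volume ({ p : ℝ × ℝ | δ < |xf f p.1 - yf f p.2| } ∩ unitSquare)
      = volume (({ p : ℝ × ℝ | δ < |xf f p.1 - yf f p.2| } ∩ unitSquare) \ N) :=
        (measure_diff_null hN0).symm
    _ = volume ((unitSquare ∩ { p : ℝ × ℝ | δ < |f p.1 - gg f p.2| }) \ N) := by rw [hkey]
    _ = volume (unitSquare ∩ { p : ℝ × ℝ | δ < |f p.1 - gg f p.2| }) :=
        measure_diff_null hN0

lemma arith {δ a b c d : ℝ} (hδl : 1/2 < δ) (hδr : δ ≤ 1)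
    (ha0 : 0 ≤ a) (ha1 : a ≤ 1) (hc0 : 0 ≤ c) (hc1 : c ≤ 1)
    (hd1 : d ≤ 1) (hb1 : b ≤ 1)
    (hab : a ≤ b) (hcd : c ≤ d)
    (h1 : 1 - δ < a → δ ≤ d) (h2 : 1 - δ < c → δ ≤ b) :
    a * (1 - d) + (1 - b) * c ≤ 2 * δ * (1 - δ) := by
  rcases le_or_gt a (1 - δ) with hA | hA
  · rcases le_or_gt c (1 - δ) with hC | hC
    · nlinarith [mul_nonneg ha0 (sub_nonneg.2 hcd), mul_nonneg hc0 (sub_nonneg.2 hab),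
        mul_nonneg (sub_nonneg.2 hA) (by linarith : (0:ℝ) ≤ 1 - 2*c),
        mul_nonneg (by linarith : (0:ℝ) ≤ 2*δ - 1) (sub_nonneg.2 hC)]
    · have hb := h2 hC
      nlinarith [mul_nonneg ha0 (sub_nonneg.2 hcd), mul_nonneg hc0 (sub_nonneg.2 hb),
        mul_nonneg (by linarith : (0:ℝ) ≤ 1 - c) (by linarith : (0:ℝ) ≤ 1 - δ - a),
        mul_nonneg (by linarith : (0:ℝ) ≤ 1 - δ) (by linarith : (0:ℝ) ≤ 2*δ - 1)]
  · have hd := h1 hA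
    rcases le_or_gt c (1 - δ) with hC | hC
    · nlinarith [mul_nonneg ha0 (sub_nonneg.2 hd), mul_nonneg hc0 (sub_nonneg.2 hab),
        mul_nonneg (by linarith : (0:ℝ) ≤ 1 - a) (by linarith : (0:ℝ) ≤ 1 - δ - c),
        mul_nonneg (by linarith : (0:ℝ) ≤ 1 - δ) (by linarith : (0:ℝ) ≤ 2*δ - 1)]
    · have hb := h2 hC
      rcases le_or_gt a δ with haδ | haδ
      · rcases le_or_gt c δ with hcδ | hcδ
        · nlinarith [mul_nonneg ha0 (sub_nonneg.2 hd), mul_nonneg hc0 (sub_nonneg.2 hb),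
            mul_nonneg (by linarith : (0:ℝ) ≤ 1 - δ) (by linarith : (0:ℝ) ≤ δ - a),
            mul_nonneg (by linarith : (0:ℝ) ≤ 1 - δ) (by linarith : (0:ℝ) ≤ δ - c)]
        · nlinarith [mul_nonneg ha0 (sub_nonneg.2 hcd), mul_nonneg hc0 (sub_nonneg.2 hb),
            mul_nonneg (by linarith : (0:ℝ) ≤ c - δ) (by linarith : (0:ℝ) ≤ a - 1 + δ),
            mul_nonneg (by linarith : (0:ℝ) ≤ 1 - δ) (by linarith : (0:ℝ) ≤ δ - a)]
      · rcases le_or_gt c δ with hcδ | hcδ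
        · nlinarith [mul_nonneg ha0 (sub_nonneg.2 hd), mul_nonneg hc0 (sub_nonneg.2 hab),
            mul_nonneg (by linarith : (0:ℝ) ≤ a - δ) (by linarith : (0:ℝ) ≤ c - 1 + δ),
            mul_nonneg (by linarith : (0:ℝ) ≤ 1 - δ) (by linarith : (0:ℝ) ≤ δ - c)]
        · nlinarith [mul_nonneg ha0 (sub_nonneg.2 hcd), mul_nonneg hc0 (sub_nonneg.2 hab),
            mul_nonneg (by linarith : (0:ℝ) ≤ a - δ) (by linarith : (0:ℝ) ≤ 2*c - 1),
            mul_nonneg (by linarith : (0:ℝ) ≤ c - δ) (by linarith : (0:ℝ) ≤ 2*δ - 1)]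

lemma prob_le {f : ℝ → ℝ} (hf : IsStepFn f) {δ : ℝ} (hδ : δ ∈ Set.Ioc (1/2 : ℝ) 1) :
    (sqMeasure { p : ℝ × ℝ | δ < |xf f p.1 - yf f p.2| }).toReal ≤ 2 * δ * (1 - δ) := by
  obtain ⟨hδl, hδr⟩ := hδ
  have hδ0 : (0:ℝ) < δ := by linarith
  have hδmem : δ ∈ Set.Icc (0:ℝ) 1 := ⟨le_of_lt hδ0, hδr⟩
  have hδ'mem : (1-δ) ∈ Set.Icc (0:ℝ) 1 := ⟨by linarith, by linarith⟩
  have ha0 := gg_nonneg f δ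
  have ha1 := gg_le_one f δ
  have hb1 := gg_le_one f (1-δ)
  have hc := hf.1 δ hδmem
  have hd := hf.1 (1-δ) hδ'mem
  have hab : gg f δ ≤ gg f (1-δ) := gg_anti f (by linarith)
  have hcd : f δ ≤ f (1-δ) := hf.2.1 hδ'mem hδmem (by linarith)
  have h1 : 1 - δ < gg f δ → δ ≤ f (1-δ) :=
    fun h => le_of_lt (lt_of_lt_gg hf hδ'mem h)
  have h2 : 1 - δ < f δ → δ ≤ gg f (1-δ) :=
    fun h => le_gg hf hδmem h
  have hcover : unitSquare ∩ { p : ℝ × ℝ | δ < |f p.1 - gg f p.2| }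
      ⊆ (Set.Icc (0:ℝ) (gg f δ) ×ˢ Set.Icc (f (1-δ)) 1)
        ∪ (Set.Icc (gg f (1-δ)) 1 ×ˢ Set.Icc (0:ℝ) (f δ)) := by
    rintro ⟨u, v⟩ ⟨⟨hu, hv⟩, habs⟩
    simp only [Set.mem_setOf_eq] at habs
    rcases lt_abs.1 habs with h | h
    · left
      have hga : u ≤ gg f δ := le_gg hf hu (by have := gg_nonneg f v; linarith)
      have hvd : f (1-δ) ≤ v := by
        by_contra hcon
        push_neg at hcon
        have h3 : 1 - δ ≤ gg f v := le_gg hf hδ'mem hcon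
        have h4 : f u ≤ 1 := (hf.1 u hu).2
        linarith
      exact ⟨⟨hu.1, hga⟩, hvd, hv.2⟩
    · right
      have hvc : v ≤ f δ := by
        have hgv : δ < gg f v := by have := (hf.1 u hu).1; linarith
        exact le_of_lt (lt_of_lt_gg hf hδmem hgv)
      have hub : gg f (1-δ) ≤ u := by
        by_contra hcon
        push_neg at hcon
        have h3 : 1 - δ < f u := lt_of_lt_gg hf hu hcon
        have h4 : gg f v ≤ 1 := gg_le_one f v
        linarith
      exact ⟨⟨hub, hu.2⟩, hv.1, hvc⟩
  have hR1 : volume (Set.Icc (0:ℝ) (gg f δ) ×ˢ Set.Icc (f (1-δ)) 1)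
      = ENNReal.ofReal (gg f δ) * ENNReal.ofReal (1 - f (1-δ)) := by
    rw [Measure.volume_eq_prod, Measure.prod_prod, Real.volume_Icc, Real.volume_Icc, sub_zero]
  have hR2 : volume (Set.Icc (gg f (1-δ)) 1 ×ˢ Set.Icc (0:ℝ) (f δ))
      = ENNReal.ofReal (1 - gg f (1-δ)) * ENNReal.ofReal (f δ) := by
    rw [Measure.volume_eq_prod, Measure.prod_prod, Real.volume_Icc, Real.volume_Icc, sub_zero]
  have hle : volume (unitSquare ∩ { p : ℝ × ℝ | δ < |f p.1 - gg f p.2| })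
      ≤ ENNReal.ofReal (gg f δ * (1 - f (1-δ)) + (1 - gg f (1-δ)) * f δ) := by
    calc volume (unitSquare ∩ { p : ℝ × ℝ | δ < |f p.1 - gg f p.2| })
        ≤ volume (Set.Icc (0:ℝ) (gg f δ) ×ˢ Set.Icc (f (1-δ)) 1)
          + volume (Set.Icc (gg f (1-δ)) 1 ×ˢ Set.Icc (0:ℝ) (f δ)) :=
          le_trans (measure_mono hcover) (measure_union_le _ _)
      _ = ENNReal.ofReal (gg f δ * (1 - f (1-δ))) + ENNReal.ofReal ((1 - gg f (1-δ)) * f δ) := by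
          rw [hR1, hR2, ← ENNReal.ofReal_mul ha0, ← ENNReal.ofReal_mul (by linarith)]
      _ = ENNReal.ofReal (gg f δ * (1 - f (1-δ)) + (1 - gg f (1-δ)) * f δ) :=
          (ENNReal.ofReal_add (mul_nonneg ha0 (by linarith [hd.2]))
            (mul_nonneg (by linarith) hc.1)).symm
  rw [measure_event hf δ]
  apply ENNReal.toReal_le_of_le_ofReal (by nlinarith)
  refine le_trans hle (ENNReal.ofReal_le_ofReal ?_)
  exact arith hδl hδr ha0 ha1 hc.1 hc.2 hd.2 hb1 hab hcd h1 h2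

noncomputable def ft (t : ℝ) : ℝ → ℝ := fun u => if u ≤ t then t else 0

lemma isStepFn_ft {t : ℝ} (h0 : 0 ≤ t) (h1 : t ≤ 1) : IsStepFn (ft t) := by
  refine ⟨?_, ?_, ?_⟩
  · intro u _
    by_cases h : u ≤ t <;> simp [ft, h] <;> constructor <;> linarith
  · intro u hu u' hu' huu'
    by_cases h' : u' ≤ t
    · have h : u ≤ t := le_trans huu' h'
      simp [ft, h, h']
    · by_cases h : u ≤ t <;> simp [ft, h, h'] <;> linarith
  · apply Set.Finite.subset (Set.Finite.insert t (Set.finite_singleton 0))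
    rintro x ⟨u, _, rfl⟩
    by_cases h : u ≤ t <;> simp [ft, h]

lemma gg_ft {t v : ℝ} (ht0 : 0 < t) (ht1 : t ≤ 1) (hv : 0 ≤ v) :
    gg (ft t) v = if v < t then t else 0 := by
  by_cases hvt : v < t
  · have hset : { s : ℝ | s ∈ Set.Icc (0 : ℝ) 1 ∧ v < ft t s } = Set.Icc (0:ℝ) t := by
      ext s
      constructor
      · rintro ⟨hs01, hlt⟩
        refine ⟨hs01.1, ?_⟩
        by_contra hst
        push_neg at hst
        simp [ft, not_le.2 hst] at hlt
        linarith
      · intro hs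
        refine ⟨⟨hs.1, le_trans hs.2 ht1⟩, ?_⟩
        simp [ft, hs.2]
        exact hvt
    rw [gg, hset, if_pos hvt, Real.volume_Icc, sub_zero, ENNReal.toReal_ofReal ht0.le]
  · have hset : { s : ℝ | s ∈ Set.Icc (0 : ℝ) 1 ∧ v < ft t s } = ∅ := by
      ext s
      simp only [Set.mem_setOf_eq, Set.mem_empty_iff_false, iff_false]
      rintro ⟨hs01, hlt⟩
      by_cases h : s ≤ t <;> simp [ft, h] at hlt <;> [linarith [not_lt.1 hvt]; linarith]
    rw [gg, hset, if_neg hvt]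
    simp

lemma member_val {δ t : ℝ} (hδl : 1/2 < δ) (ht : δ < t) (ht1 : t ≤ 1) :
    (sqMeasure { p : ℝ × ℝ | δ < |xf (ft t) p.1 - yf (ft t) p.2| }).toReal
      = 2 * t * (1 - t) := by
  have ht0 : (0:ℝ) < t := by linarith
  have hstep := isStepFn_ft ht0.le ht1
  rw [measure_event hstep δ]
  have hset : unitSquare ∩ { p : ℝ × ℝ | δ < |ft t p.1 - gg (ft t) p.2| }
      = (Set.Icc (0:ℝ) t ×ˢ Set.Icc t 1) ∪ (Set.Ioc t 1 ×ˢ Set.Ico (0:ℝ) t) := by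
    ext ⟨u, v⟩
    simp only [Set.mem_inter_iff, Set.mem_union, Set.mem_prod, Set.mem_setOf_eq,
      Set.mem_Icc, Set.mem_Ioc, Set.mem_Ico]
    constructor
    · rintro ⟨⟨hu, hv⟩, habs⟩
      simp only [Set.mem_Icc] at hu hv
      rw [gg_ft ht0 ht1 hv.1] at habs
      rcases le_or_gt u t with hut | hut <;> rcases lt_or_ge v t with hvt | hvt
      · exfalso
        rw [if_pos hvt] at habs
        simp [ft, hut] at habs
        linarith
      · exact Or.inl ⟨⟨hu.1, hut⟩, hvt, hv.2⟩
      · exact Or.inr ⟨⟨hut, hu.2⟩, hv.1, hvt⟩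
      · exfalso
        rw [if_neg (not_lt.2 hvt)] at habs
        simp [ft, not_le.2 hut] at habs
        linarith
    · rintro (⟨hu, hv⟩ | ⟨hu, hv⟩)
      · have hsq : u ∈ Set.Icc (0:ℝ) 1 ∧ v ∈ Set.Icc (0:ℝ) 1 :=
          ⟨⟨hu.1, le_trans hu.2 ht1⟩, ⟨le_trans ht0.le hv.1, hv.2⟩⟩
        refine ⟨hsq, ?_⟩
        rw [gg_ft ht0 ht1 hsq.2.1, if_neg (not_lt.2 hv.1)]
        simp [ft, hu.2]
        rw [abs_of_nonneg ht0.le]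
        exact ht
      · have hsq : u ∈ Set.Icc (0:ℝ) 1 ∧ v ∈ Set.Icc (0:ℝ) 1 :=
          ⟨⟨le_trans ht0.le hu.1.le, hu.2⟩, ⟨hv.1, le_trans hv.2.le ht1⟩⟩
        refine ⟨hsq, ?_⟩
        rw [gg_ft ht0 ht1 hsq.2.1, if_pos hv.2]
        simp [ft, not_le.2 hu.1]
        rw [abs_of_nonneg ht0.le]
        exact ht
  rw [hset]
  have hdisj : Disjoint (Set.Icc (0:ℝ) t ×ˢ Set.Icc t 1) (Set.Ioc t 1 ×ˢ Set.Ico (0:ℝ) t) := by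
    rw [Set.disjoint_left]
    rintro ⟨u, v⟩ hA hB
    exact absurd hB.1.1 (not_lt.2 hA.1.2)
  rw [measure_union hdisj (measurableSet_Ioc.prod measurableSet_Ico)]
  rw [Measure.volume_eq_prod, Measure.prod_prod, Measure.prod_prod,
    Real.volume_Icc, Real.volume_Icc, Real.volume_Ioc, Real.volume_Ico, sub_zero,
    ← ENNReal.ofReal_mul ht0.le, ← ENNReal.ofReal_mul (by linarith : (0:ℝ) ≤ 1 - t),
    ← ENNReal.ofReal_add (by nlinarith) (by nlinarith),
    ENNReal.toReal_ofReal (by nlinarith)]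
  ring

lemma zero_mem {δ : ℝ} (hδ0 : 0 < δ) :
    (sqMeasure { p : ℝ × ℝ | δ < |xf (fun _ => (0:ℝ)) p.1 - yf (fun _ => (0:ℝ)) p.2| }).toReal
      = 0 := by
  have hstep : IsStepFn (fun _ => (0:ℝ)) := by
    refine ⟨fun u _ => ⟨le_refl 0, zero_le_one⟩, fun u _ u' _ _ => le_refl 0, ?_⟩
    apply Set.Finite.subset (Set.finite_singleton 0)
    rintro x ⟨u, _, rfl⟩
    rfl
  rw [measure_event hstep δ]
  have hset : unitSquare ∩ { p : ℝ × ℝ | δ < |(0:ℝ) - gg (fun _ => (0:ℝ)) p.2| } = ∅ := by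
    ext ⟨u, v⟩
    simp only [Set.mem_inter_iff, Set.mem_setOf_eq, Set.mem_empty_iff_false, iff_false]
    rintro ⟨⟨hu, hv⟩, habs⟩
    have hgg : gg (fun _ => (0:ℝ)) v = 0 := by
      have : { s : ℝ | s ∈ Set.Icc (0 : ℝ) 1 ∧ v < (0:ℝ) } = ∅ := by
        ext s
        simp only [Set.mem_setOf_eq, Set.mem_empty_iff_false, iff_false]
        rintro ⟨_, hlt⟩
        exact absurd hlt (not_lt.2 hv.1)
      rw [gg, this]
      simp
    rw [hgg] at habs
    simp at habs
    linarith
  rw [hset]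
  simp

/-- For every `δ ∈ (1/2, 1]`, the supremum over all weakly decreasing step functions
`f : [0,1] → [0,1]` of `P(|X_f - Y_f| > δ)` equals `2δ(1 - δ)`, where `X_f(u,v) = x_f(u)` and
`Y_f(u,v) = y_f(v)` on the unit square with Lebesgue product probability measure; in particular
`P(|X_f - Y_f| > δ) ≤ 2δ(1 - δ)` for every such `f`. -/
theorem isLUB_prob_abs_diff_gt (δ : ℝ) (hδ : δ ∈ Set.Ioc (1 / 2 : ℝ) 1) :
    IsLUB { r : ℝ | ∃ f : ℝ → ℝ, IsStepFn f ∧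
        r = (sqMeasure { p : ℝ × ℝ | δ < |xf f p.1 - yf f p.2| }).toReal }
      (2 * δ * (1 - δ)) ∧
    (∀ f : ℝ → ℝ, IsStepFn f →
      (sqMeasure { p : ℝ × ℝ | δ < |xf f p.1 - yf f p.2| }).toReal ≤ 2 * δ * (1 - δ)) := by
  have hδ0 : (0:ℝ) < δ := by linarith [hδ.1]
  constructor
  · constructor
    · rintro r ⟨f, hf, rfl⟩
      exact prob_le hf hδ
    · intro ub hub
      rcases lt_or_eq_of_le hδ.2 with hδ1 | hδ1
      · apply le_of_forall_pos_le_add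
        intro ε hε
        set t : ℝ := min ((1+δ)/2) (δ + ε/2) with htdef
        have htδ : δ < t := lt_min (by linarith [hδ.1]) (by linarith)
        have ht1 : t ≤ 1 := le_trans (min_le_left _ _) (by linarith)
        have htε : t ≤ δ + ε/2 := min_le_right _ _
        have hmem : 2 * t * (1 - t) ∈ { r : ℝ | ∃ f : ℝ → ℝ, IsStepFn f ∧
            r = (sqMeasure { p : ℝ × ℝ | δ < |xf f p.1 - yf f p.2| }).toReal } :=
          ⟨ft t, isStepFn_ft (by linarith) ht1, (member_val hδ.1 htδ ht1).symm⟩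
        have hub' := hub hmem
        nlinarith [htδ.le, ht1]
      · have hmem : (0:ℝ) ∈ { r : ℝ | ∃ f : ℝ → ℝ, IsStepFn f ∧
            r = (sqMeasure { p : ℝ × ℝ | δ < |xf f p.1 - yf f p.2| }).toReal } := by
          refine ⟨fun _ => (0:ℝ), ?_, (zero_mem hδ0).symm⟩
          refine ⟨fun u _ => ⟨le_refl 0, zero_le_one⟩, fun u _ u' _ _ => le_refl 0, ?_⟩
          apply Set.Finite.subset (Set.finite_singleton 0)
          rintro x ⟨u, _, rfl⟩
          rfl
        rw [hδ1]
        linarith [hub hmem]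
  · intro f hf
    exact prob_le hf hδ
end
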